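/- arXiv:2103.09073 — 5 statements merged into one kernel-verified Lean document; each statement's English description precedes it below -/
import Mathlib

section
/- Let h = (I, E) be a hypergraph, let y ∈ {1,…,m}^I be an integer direction, and let c_y be the coloring c_y(i) = y(i). Then the number of vertices of the y-maximal face P(h)_y of the hypergraphic polytope P(h) equals the number of acyclic headings of h that are compatible with the coloring c_y. -/
open Set Pointwise
open scoped Classical

noncomputable section

/-- The pairing of a direction `y` with a point `x`: `y(x) = ∑ i, y i * x i`. -/
def evalDir {I : Type*} [Fintype I] (y x : I → ℝ) : ℝ := ∑ i, y i * x i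

/-- A polytope is the convex hull of a nonempty finite set of points. -/
def IsPolytope {I : Type*} [Fintype I] (P : Set (I → ℝ)) : Prop :=
  ∃ V : Finset (I → ℝ), V.Nonempty ∧ P = convexHull ℝ (V : Set (I → ℝ))

/-- The `y`-maximal face of `P`. -/
def maxFace {I : Type*} [Fintype I] (P : Set (I → ℝ)) (y : I → ℝ) : Set (I → ℝ) :=
  {x ∈ P | ∀ x' ∈ P, evalDir y x' ≤ evalDir y x}

/-- The simplex `Δ_e = conv{ b_i : i ∈ e }` of a hyperedge `e`. -/
def hgSimplex {I : Type*} [Fintype I] [DecidableEq I] (e : Finset I) : Set (I → ℝ) :=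
  convexHull ℝ ((fun i => Pi.single i (1 : ℝ)) '' (e : Set I))

/-- The hypergraphic polytope of the hypergraph with hyperedges `edges a`, `a : ι`:
the Minkowski sum `Σ_a Δ_{edges a}`. -/
def hgPolytope {I : Type*} [Fintype I] [DecidableEq I] {ι : Type*} [Fintype ι]
    (edges : ι → Finset I) : Set (I → ℝ) :=
  {x | ∃ f : ι → I → ℝ, (∀ a, f a ∈ hgSimplex (edges a)) ∧ x = ∑ a, f a}

/-- A heading of a hypergraph: a choice of a head `σ e ∈ e` for every hyperedge `e`. -/
def IsHeading {I : Type*} {ι : Type*} (edges : ι → Finset I) (σ : ι → I) : Prop :=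
  ∀ a, σ a ∈ edges a

/-- A heading contains an oriented cycle `e_1, …, e_ℓ` if `σ(e_j) ∈ e_{j+1} \ {σ(e_{j+1})}`
cyclically (indices mod `ℓ`). -/
def HasOrientedCycle {I : Type*} {ι : Type*} (edges : ι → Finset I) (σ : ι → I) : Prop :=
  ∃ (ℓ : ℕ) (a : ℕ → ι), 0 < ℓ ∧
    ∀ j < ℓ, σ (a j) ∈ edges (a ((j + 1) % ℓ)) ∧ σ (a j) ≠ σ (a ((j + 1) % ℓ))

/-- An acyclic heading: a heading with no oriented cycle. -/
def IsAcyclicHeading {I : Type*} {ι : Type*} (edges : ι → Finset I) (σ : ι → I) : Prop :=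
  IsHeading edges σ ∧ ¬ HasOrientedCycle edges σ

/-- The in-degree vector `δ(σ)` of a heading: `δ(σ)_i` is the number of hyperedges with
head `i`. -/
def inDegVec {I : Type*} [DecidableEq I] {ι : Type*} [Fintype ι] (σ : ι → I) : I → ℝ :=
  fun i => ((Finset.univ.filter fun a => σ a = i).card : ℝ)

/-- A coloring `c` of a hypergraph is proper if every hyperedge has a unique maximal node. -/
def IsProperColoring {I : Type*} {ι : Type*} (edges : ι → Finset I) (c : I → ℕ) : Prop :=
  ∀ a, ∃! i, i ∈ edges a ∧ ∀ j ∈ edges a, c j ≤ c i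

/-- A heading `σ` and a coloring `c` are compatible if, for every hyperedge, the head
carries the maximal color of the hyperedge. -/
def Compatible {I : Type*} {ι : Type*} (edges : ι → Finset I) (σ : ι → I) (c : I → ℕ) :
    Prop :=
  ∀ a, ∀ j ∈ edges a, c j ≤ c (σ a)


set_option linter.unusedSectionVars false
set_option maxHeartbeats 1000000

section Machinery
variable {I : Type*} [Fintype I] [DecidableEq I] {ι : Type*} [Fintype ι]

lemma inDegVec_eq_sum (σ : ι → I) : inDegVec σ = ∑ a, Pi.single (σ a) (1:ℝ) := by
  funext i
  rw [Finset.sum_apply]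
  simp [inDegVec, Pi.single_apply, Finset.sum_boole, eq_comm]

def evalL (y : I → ℝ) : (I → ℝ) →ₗ[ℝ] ℝ where
  toFun := evalDir y
  map_add' x x' := by simp [evalDir, mul_add, Finset.sum_add_distrib]
  map_smul' c x := by simp [evalDir, Finset.mul_sum, mul_left_comm]

lemma evalDir_isLinearMap (y : I → ℝ) : IsLinearMap ℝ (evalDir y) :=
  ⟨(evalL y).map_add, (evalL y).map_smul⟩

lemma evalDir_single (y : I → ℝ) (i : I) : evalDir y (Pi.single i 1) = y i := by
  simp [evalDir, Pi.single_apply, mul_ite]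

lemma evalDir_inDegVec (y : I → ℝ) (σ : ι → I) :
    evalDir y (inDegVec σ) = ∑ a, y (σ a) := by
  rw [inDegVec_eq_sum]
  have h : evalDir y (∑ a, Pi.single (σ a) (1:ℝ)) = evalL y (∑ a, Pi.single (σ a) (1:ℝ)) := rfl
  rw [h, map_sum]
  simp only [evalL, LinearMap.coe_mk, AddHom.coe_mk, evalDir_single]
  exact Finset.sum_congr rfl fun a _ => evalDir_single y (σ a)

lemma evalDir_le_of_mem_convexHull {V : Set (I → ℝ)} {w : I → ℝ} {M : ℝ}
    (hM : ∀ v ∈ V, evalDir w v ≤ M) {x : I → ℝ} (hx : x ∈ convexHull ℝ V) :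
    evalDir w x ≤ M :=
  convexHull_min hM (convex_halfSpace_le (evalDir_isLinearMap w) M) hx

lemma evalDir_eq_of_mem_convexHull {V : Set (I → ℝ)} {w : I → ℝ} {M : ℝ}
    (hM : ∀ v ∈ V, evalDir w v = M) {x : I → ℝ} (hx : x ∈ convexHull ℝ V) :
    evalDir w x = M :=
  convexHull_min hM (convex_hyperplane (evalDir_isLinearMap w) M) hx

lemma mem_convexHull_filter {V : Finset (I → ℝ)} {w : I → ℝ} {M : ℝ}
    (hM : ∀ v ∈ V, evalDir w v ≤ M) {x : I → ℝ}
    (hx : x ∈ convexHull ℝ (V : Set (I → ℝ))) (hxM : evalDir w x = M) :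
    x ∈ convexHull ℝ ((V.filter fun v => evalDir w v = M : Finset (I → ℝ)) : Set (I → ℝ)) := by
  rw [Finset.convexHull_eq] at hx
  obtain ⟨c, hc0, hc1, hcm⟩ := hx
  have hxs : x = ∑ v ∈ V, c v • v := by
    rw [← hcm, Finset.centerMass_eq_of_sum_1 _ _ hc1]
    exact Finset.sum_congr rfl (fun v _ => rfl)
  have hev : evalDir w x = ∑ v ∈ V, c v * evalDir w v := by
    have h : evalDir w x = evalL w x := rfl
    rw [h, hxs, map_sum]
    simp only [map_smul, smul_eq_mul]
    rfl
  have key : ∀ v ∈ V, c v ≠ 0 → evalDir w v = M := by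
    by_contra hcon
    push_neg at hcon
    obtain ⟨v0, hv0, hc0v, hne⟩ := hcon
    have hlt : evalDir w v0 < M := lt_of_le_of_ne (hM v0 hv0) hne
    have hpos : 0 < c v0 := lt_of_le_of_ne (hc0 v0 hv0) (Ne.symm hc0v)
    have hs : ∑ v ∈ V, c v * evalDir w v < ∑ v ∈ V, c v * M := by
      refine Finset.sum_lt_sum (fun v hv => ?_) ⟨v0, hv0, ?_⟩
      · rcases eq_or_lt_of_le (hc0 v hv) with h | h
        · simp [← h]
        · exact mul_le_mul_of_nonneg_left (hM v hv) h.le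
      · exact mul_lt_mul_of_pos_left hlt hpos
    rw [← Finset.sum_mul, hc1, one_mul, ← hev, hxM] at hs
    exact lt_irrefl _ hs
  have hrw : x = (V.filter fun v => c v ≠ 0).centerMass c id := by
    rw [Finset.centerMass_filter_ne_zero, Finset.centerMass_eq_of_sum_1 _ _ hc1, hxs]
    exact Finset.sum_congr rfl fun v _ => rfl
  have hsum : ∑ v ∈ V.filter fun v => c v ≠ 0, c v = 1 := by
    rw [Finset.sum_filter_ne_zero, hc1]
  rw [hrw]
  refine Finset.centerMass_mem_convexHull _ (fun v hv => hc0 v (Finset.mem_filter.1 hv).1)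
    (by rw [hsum]; norm_num) (fun v hv => ?_)
  obtain ⟨hvV, hvc⟩ := Finset.mem_filter.1 hv
  exact Finset.mem_coe.2 (Finset.mem_filter.2 ⟨hvV, key v hvV hvc⟩)

lemma maxFace_convexHull {V : Finset (I → ℝ)} {w : I → ℝ} {M : ℝ}
    (hM : ∀ v ∈ V, evalDir w v ≤ M) (hex : ∃ v ∈ V, evalDir w v = M) :
    maxFace (convexHull ℝ (V : Set (I → ℝ))) w =
      convexHull ℝ ((V.filter fun v => evalDir w v = M : Finset (I → ℝ)) : Set (I → ℝ)) := by
  obtain ⟨v0, hv0, hv0M⟩ := hex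
  ext x
  constructor
  · rintro ⟨hxP, hmax⟩
    have h1 : evalDir w x ≤ M := evalDir_le_of_mem_convexHull hM hxP
    have h2 : M ≤ evalDir w x := by
      rw [← hv0M]
      exact hmax v0 (subset_convexHull ℝ _ hv0)
    exact mem_convexHull_filter hM hxP (le_antisymm h1 h2)
  · intro hx
    have hxV : x ∈ convexHull ℝ (V : Set (I → ℝ)) :=
      convexHull_mono (by exact_mod_cast Finset.filter_subset _ _) hx
    have hxM : evalDir w x = M :=
      evalDir_eq_of_mem_convexHull (fun v hv => (Finset.mem_filter.1 (Finset.mem_coe.1 hv)).2) hx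
    exact ⟨hxV, fun x' hx' => by rw [hxM]; exact evalDir_le_of_mem_convexHull hM hx'⟩

lemma extremePoint_of_strict_max {V : Finset (I → ℝ)} {w : I → ℝ} {v : I → ℝ}
    (hv : v ∈ V) (hstrict : ∀ u ∈ V, u ≠ v → evalDir w u < evalDir w v) :
    v ∈ (convexHull ℝ (V : Set (I → ℝ))).extremePoints ℝ := by
  have hM : ∀ u ∈ V, evalDir w u ≤ evalDir w v := fun u hu => by
    rcases eq_or_ne u v with rfl | h
    · exact le_refl _
    · exact (hstrict u hu h).le
  have hfil : (V.filter fun u => evalDir w u = evalDir w v) = {v} := by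
    ext u
    simp only [Finset.mem_filter, Finset.mem_singleton]
    constructor
    · rintro ⟨huV, hue⟩
      by_contra hne
      exact absurd hue (ne_of_lt (hstrict u huV hne))
    · rintro rfl; exact ⟨hv, rfl⟩
  refine ⟨subset_convexHull ℝ _ hv, fun x₁ hx₁ x₂ hx₂ hseg => ?_⟩
  obtain ⟨a, b, ha, hb, hab, habv⟩ := hseg
  have hev : a * evalDir w x₁ + b * evalDir w x₂ = evalDir w v := by
    have h := congrArg (evalL w) habv
    simp only [map_add, map_smul, smul_eq_mul] at h
    exact h
  have h1 : evalDir w x₁ ≤ evalDir w v := evalDir_le_of_mem_convexHull hM hx₁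
  have h2 : evalDir w x₂ ≤ evalDir w v := evalDir_le_of_mem_convexHull hM hx₂
  have he1 : evalDir w x₁ = evalDir w v := by
    by_contra hne
    have hlt : evalDir w x₁ < evalDir w v := lt_of_le_of_ne h1 hne
    have hsplit : a * evalDir w v + b * evalDir w v = evalDir w v := by
      rw [← add_mul, hab, one_mul]
    nlinarith [mul_lt_mul_of_pos_left hlt ha, mul_le_mul_of_nonneg_left h2 hb.le]
  have he2 : evalDir w x₂ = evalDir w v := by
    by_contra hne
    have hlt : evalDir w x₂ < evalDir w v := lt_of_le_of_ne h2 hne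
    have hsplit : a * evalDir w v + b * evalDir w v = evalDir w v := by
      rw [← add_mul, hab, one_mul]
    nlinarith [mul_lt_mul_of_pos_left hlt hb, mul_le_mul_of_nonneg_left h1 ha.le]
  have m1 : x₁ ∈ convexHull ℝ ((V.filter fun u => evalDir w u = evalDir w v :
      Finset (I → ℝ)) : Set (I → ℝ)) := mem_convexHull_filter hM hx₁ he1
  have m2 : x₂ ∈ convexHull ℝ ((V.filter fun u => evalDir w u = evalDir w v :
      Finset (I → ℝ)) : Set (I → ℝ)) := mem_convexHull_filter hM hx₂ he2
  rw [hfil] at m1 m2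
  simp only [Finset.coe_singleton, convexHull_singleton, Set.mem_singleton_iff] at m1 m2
  exact m1

lemma extremePoint_not_mem_erase {V : Finset (I → ℝ)} {x : I → ℝ}
    (hx : x ∈ (convexHull ℝ (V : Set (I → ℝ))).extremePoints ℝ) :
    x ∉ convexHull ℝ ((V.erase x : Finset (I → ℝ)) : Set (I → ℝ)) := by
  intro hmem
  have hsub : convexHull ℝ ((V.erase x : Finset (I → ℝ)) : Set (I → ℝ)) ⊆
      convexHull ℝ (V : Set (I → ℝ)) :=
    convexHull_mono (by exact_mod_cast Finset.erase_subset _ _)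
  have hext : x ∈ (convexHull ℝ ((V.erase x : Finset (I → ℝ)) : Set (I → ℝ))).extremePoints ℝ :=
    ⟨hmem, fun x₁ h₁ x₂ h₂ hseg => hx.2 (hsub h₁) (hsub h₂) hseg⟩
  have h := extremePoints_convexHull_subset hext
  exact (Finset.mem_erase.1 (Finset.mem_coe.1 h)).1 rfl

lemma exists_strict_sep {V : Finset (I → ℝ)} {x : I → ℝ}
    (hx : x ∈ (convexHull ℝ (V : Set (I → ℝ))).extremePoints ℝ) :
    ∃ w : I → ℝ, ∀ u ∈ V, u ≠ x → evalDir w u < evalDir w x := by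
  have hnm := extremePoint_not_mem_erase hx
  obtain ⟨f, u, hfu, hux⟩ := geometric_hahn_banach_closed_point
    (convex_convexHull ℝ _) ((V.erase x).finite_toSet.isClosed_convexHull (𝕜 := ℝ)) hnm
  refine ⟨fun i => f (Pi.single i 1), fun v hv hne => ?_⟩
  have hfeval : ∀ z : I → ℝ, evalDir (fun i => f (Pi.single i 1)) z = f z := by
    intro z
    have hz : z = ∑ i, z i • (Pi.single i 1 : I → ℝ) := by
      funext j
      simp [Finset.sum_apply, Pi.single_apply, eq_comm]
    conv_rhs => rw [hz]
    rw [map_sum]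
    simp [evalDir, mul_comm]
  rw [hfeval, hfeval]
  have hvmem : v ∈ convexHull ℝ ((V.erase x : Finset (I → ℝ)) : Set (I → ℝ)) :=
    subset_convexHull ℝ _ (Finset.mem_coe.2 (Finset.mem_erase.2 ⟨hne, hv⟩))
  exact lt_trans (hfu v hvmem) hux

end Machinery

section Combinatorics

lemma sum_shift {M : Type*} [AddCommMonoid M] (g : ℕ → M) {ℓ : ℕ} (hℓ : 0 < ℓ) :
    ∑ j ∈ Finset.range ℓ, g ((j + 1) % ℓ) = ∑ j ∈ Finset.range ℓ, g j := by
  obtain ⟨n, rfl⟩ : ∃ n, ℓ = n + 1 := ⟨ℓ - 1, by omega⟩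
  rw [Finset.sum_range_succ, Finset.sum_range_succ']
  have h1 : ∀ j ∈ Finset.range n, g ((j + 1) % (n + 1)) = g (j + 1) := by
    intro j hj
    rw [Nat.mod_eq_of_lt (by simp only [Finset.mem_range] at hj; omega)]
  rw [Finset.sum_congr rfl h1, Nat.mod_self]

lemma cyclic_mono_eq {α : Type*} [AddCommMonoid α] [LinearOrder α] [IsOrderedCancelAddMonoid α] {ℓ : ℕ} (hℓ : 0 < ℓ)
    {g : ℕ → α} (h : ∀ j < ℓ, g j ≤ g ((j + 1) % ℓ)) : ∀ j < ℓ, g j = g ((j + 1) % ℓ) := by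
  by_contra hcon
  push_neg at hcon
  obtain ⟨j0, hj0, hne⟩ := hcon
  have hlt : ∑ j ∈ Finset.range ℓ, g j < ∑ j ∈ Finset.range ℓ, g ((j + 1) % ℓ) :=
    Finset.sum_lt_sum (fun j hj => h j (Finset.mem_range.1 hj))
      ⟨j0, Finset.mem_range.2 hj0, lt_of_le_of_ne (h j0 hj0) hne⟩
  rw [sum_shift g hℓ] at hlt
  exact lt_irrefl _ hlt

lemma transGen_chain {α : Type*} {R : α → α → Prop} {x z : α} (h : Relation.TransGen R x z) :
    ∃ (n : ℕ) (f : ℕ → α), 0 < n ∧ f 0 = x ∧ f n = z ∧ ∀ t < n, R (f t) (f (t + 1)) := by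
  induction h with
  | @single b hR =>
      refine ⟨1, fun t => if t = 0 then x else b, one_pos, by simp, by simp, ?_⟩
      intro t ht
      interval_cases t
      simpa using hR
  | @tail b c hxb hR ih =>
      obtain ⟨n, f, hn, hf0, hfn, hstep⟩ := ih
      refine ⟨n + 1, fun t => if t ≤ n then f t else c, by omega, by simp [hf0], by simp, ?_⟩
      intro t ht
      rcases Nat.lt_or_ge t n with h' | h'
      · simp only [if_pos h'.le, if_pos (by omega : t + 1 ≤ n)]
        exact hstep t h'
      · have hteq : t = n := by omega
        simp only [hteq, if_pos (le_refl n), if_neg (by omega : ¬ n + 1 ≤ n), hfn]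
        exact hR

lemma hasCycle_of_transGen {I ι : Type*} (edges : ι → Finset I) (σ : ι → I) {i : I}
    (h : Relation.TransGen (fun j i => ∃ a, σ a = i ∧ j ∈ edges a ∧ j ≠ i) i i) :
    HasOrientedCycle edges σ := by
  obtain ⟨n, f, hn, hf0, hfn, hstep⟩ := transGen_chain h
  have hbex : ∀ t, t < n → ∃ a, σ a = f (t + 1) ∧ f t ∈ edges a ∧ f t ≠ f (t + 1) := hstep
  set b : ℕ → ι := fun t => if ht : t < n then (hbex t ht).choose else (hbex 0 hn).choose with hb
  have hbprop : ∀ t (ht : t < n), σ (b t) = f (t + 1) ∧ f t ∈ edges (b t) ∧ f t ≠ f (t + 1) := by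
    intro t ht
    simp only [hb, dif_pos ht]
    exact (hbex t ht).choose_spec
  refine ⟨n, b, hn, ?_⟩
  intro j hj
  have hk : (j + 1) % n < n := Nat.mod_lt _ hn
  have hfp : f (j + 1) = f ((j + 1) % n) := by
    rcases Nat.lt_or_ge (j + 1) n with h' | h'
    · rw [Nat.mod_eq_of_lt h']
    · have hjn : j + 1 = n := by omega
      rw [hjn, Nat.mod_self, hf0, hfn]
  obtain ⟨hσj, -, -⟩ := hbprop j hj
  obtain ⟨hσk, hmemk, hnek⟩ := hbprop _ hk
  constructor
  · rw [hσj, hfp]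
    exact hmemk
  · rw [hσj, hσk, hfp]
    exact hnek

lemma exists_strict_order {I : Type*} [Fintype I] {ι : Type*}
    {edges : ι → Finset I} {σ : ι → I} (hσ : ¬ HasOrientedCycle edges σ) :
    ∃ w : I → ℝ, ∀ a, ∀ j ∈ edges a, j ≠ σ a → w j < w (σ a) := by
  set R : I → I → Prop := fun j i => ∃ a, σ a = i ∧ j ∈ edges a ∧ j ≠ i with hR
  refine ⟨fun i => (({k | Relation.ReflTransGen R k i}).ncard : ℝ), ?_⟩
  intro a j hj hne
  have hRj : R j (σ a) := ⟨a, rfl, hj, hne⟩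
  have hsub : {k | Relation.ReflTransGen R k j} ⊆ {k | Relation.ReflTransGen R k (σ a)} :=
    fun k hk => Relation.ReflTransGen.tail hk hRj
  have hnm : σ a ∉ {k | Relation.ReflTransGen R k j} := by
    intro hmem
    exact hσ (hasCycle_of_transGen edges σ (Relation.TransGen.tail' hmem hRj))
  have hss : {k | Relation.ReflTransGen R k j} ⊂ {k | Relation.ReflTransGen R k (σ a)} :=
    ⟨hsub, fun hsup => hnm (hsup Relation.ReflTransGen.refl)⟩
  have h := Set.ncard_lt_ncard hss (Set.toFinite _)
  exact Nat.cast_lt.mpr h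

lemma exists_acyclic_max {I : Type*} [Fintype I] [DecidableEq I] {ι : Type*} [Fintype ι]
    (edges : ι → Finset I) (hE : ∀ a, (edges a).Nonempty) (w : I → ℝ) :
    ∃ σ : ι → I, IsAcyclicHeading edges σ ∧ (∀ a, ∀ j ∈ edges a, w j ≤ w (σ a)) := by
  obtain ⟨u, hu⟩ : ∃ u : I → ℝ, Function.Injective u :=
    ⟨fun i => ((Fintype.equivFin I i : ℕ) : ℝ),
     fun i j h => (Fintype.equivFin I).injective (Fin.ext (Nat.cast_injective h))⟩
  have hS : ∀ a, ∃ i, (i ∈ edges a ∧ ∀ j ∈ edges a, w j ≤ w i) ∧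
      ∀ k, (k ∈ edges a ∧ ∀ j ∈ edges a, w j ≤ w k) → u k ≤ u i := by
    intro a
    obtain ⟨i0, hi0, hmax⟩ := Finset.exists_max_image (edges a) w (hE a)
    set S := (edges a).filter (fun i => ∀ j ∈ edges a, w j ≤ w i) with hSdef
    have hSne : S.Nonempty := ⟨i0, Finset.mem_filter.2 ⟨hi0, hmax⟩⟩
    obtain ⟨i, hiS, hiu⟩ := Finset.exists_max_image S u hSne
    refine ⟨i, ⟨(Finset.mem_filter.1 hiS).1, (Finset.mem_filter.1 hiS).2⟩, ?_⟩
    intro k hk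
    exact hiu k (Finset.mem_filter.2 hk)
  choose σ hσ1 hσ2 using hS
  have hhead : IsHeading edges σ := fun a => (hσ1 a).1
  have hwmax : ∀ a, ∀ j ∈ edges a, w j ≤ w (σ a) := fun a => (hσ1 a).2
  refine ⟨σ, ⟨hhead, ?_⟩, hwmax⟩
  rintro ⟨ℓ, a, hℓ, hcyc⟩
  have h1 : ∀ j < ℓ, w (σ (a j)) ≤ w (σ (a ((j + 1) % ℓ))) := fun j hj =>
    hwmax _ _ (hcyc j hj).1
  have heq : ∀ j < ℓ, w (σ (a j)) = w (σ (a ((j + 1) % ℓ))) := cyclic_mono_eq hℓ h1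
  have h2 : ∀ j < ℓ, u (σ (a j)) < u (σ (a ((j + 1) % ℓ))) := by
    intro j hj
    have hmem : σ (a j) ∈ edges (a ((j + 1) % ℓ)) := (hcyc j hj).1
    have hargmax : σ (a j) ∈ edges (a ((j + 1) % ℓ)) ∧
        ∀ k ∈ edges (a ((j + 1) % ℓ)), w k ≤ w (σ (a j)) := by
      refine ⟨hmem, fun k hk' => ?_⟩
      calc w k ≤ w (σ (a ((j + 1) % ℓ))) := hwmax _ _ hk'
        _ = w (σ (a j)) := (heq j hj).symm
    have hle : u (σ (a j)) ≤ u (σ (a ((j + 1) % ℓ))) := hσ2 _ _ hargmax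
    exact lt_of_le_of_ne hle (fun hEq => (hcyc j hj).2 (hu hEq))
  have hlt : ∑ j ∈ Finset.range ℓ, u (σ (a j)) <
      ∑ j ∈ Finset.range ℓ, u (σ (a ((j + 1) % ℓ))) :=
    Finset.sum_lt_sum_of_nonempty (Finset.nonempty_range_iff.2 hℓ.ne')
      (fun j hj => h2 j (Finset.mem_range.1 hj))
  rw [sum_shift (fun j => u (σ (a j))) hℓ] at hlt
  exact lt_irrefl _ hlt

end Combinatorics

section Assembly
variable {I : Type*} [Fintype I] [DecidableEq I] {ι : Type*} [Fintype ι]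

def headingsF (edges : ι → Finset I) : Finset (ι → I) := Finset.univ.filter (IsHeading edges)

def vertsF (edges : ι → Finset I) : Finset (I → ℝ) := (headingsF edges).image inDegVec

lemma mem_vertsF (edges : ι → Finset I) {v : I → ℝ} :
    v ∈ vertsF edges ↔ ∃ σ, IsHeading edges σ ∧ inDegVec σ = v := by
  simp [vertsF, headingsF]

lemma hgPolytope_eq (edges : ι → Finset I) :
    hgPolytope edges = convexHull ℝ ((vertsF edges : Finset (I → ℝ)) : Set (I → ℝ)) := by
  have h1 : hgPolytope edges = ∑ a, hgSimplex (edges a) := by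
    ext x
    rw [Set.mem_fintype_sum]
    constructor
    · rintro ⟨f, hf, hx⟩
      exact ⟨f, hf, hx.symm⟩
    · rintro ⟨g, hg, hx⟩
      exact ⟨g, hg, hx.symm⟩
  have h2 : (∑ a, hgSimplex (edges a)) =
      convexHull ℝ (∑ a, ((fun i => Pi.single i (1:ℝ)) '' ((edges a : Set I)))) := by
    rw [convexHull_sum]
    rfl
  have h3 : (∑ a, ((fun i => Pi.single i (1:ℝ)) '' ((edges a : Set I)))) =
      ((vertsF edges : Finset (I → ℝ)) : Set (I → ℝ)) := by
    ext x
    rw [Set.mem_fintype_sum]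
    constructor
    · rintro ⟨g, hg, hx⟩
      have hg' : ∀ a, ∃ i, i ∈ edges a ∧ Pi.single i (1:ℝ) = g a := by
        intro a
        obtain ⟨i, hi, hgi⟩ := hg a
        exact ⟨i, hi, hgi⟩
      choose σ hσ hgs using hg'
      have hx' : x = inDegVec σ := by
        rw [inDegVec_eq_sum, ← hx]
        exact Finset.sum_congr rfl fun a _ => (hgs a).symm
      rw [hx']
      exact Finset.mem_coe.2 ((mem_vertsF edges).2 ⟨σ, hσ, rfl⟩)
    · intro hx
      obtain ⟨σ, hσ, rfl⟩ := (mem_vertsF edges).1 (Finset.mem_coe.1 hx)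
      refine ⟨fun a => Pi.single (σ a) 1, fun a => ⟨σ a, hσ a, rfl⟩, ?_⟩
      rw [inDegVec_eq_sum]
  rw [h1, h2, h3]

lemma extremePoints_vertsF (edges : ι → Finset I) (hE : ∀ a, (edges a).Nonempty) :
    (convexHull ℝ ((vertsF edges : Finset (I → ℝ)) : Set (I → ℝ))).extremePoints ℝ =
      inDegVec '' {σ : ι → I | IsAcyclicHeading edges σ} := by
  apply subset_antisymm
  · intro x hx
    have hxV : x ∈ ((vertsF edges : Finset (I → ℝ)) : Set (I → ℝ)) :=
      extremePoints_convexHull_subset hx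
    obtain ⟨w, hw⟩ := exists_strict_sep hx
    obtain ⟨σ, hσac, hσmax⟩ := exists_acyclic_max edges hE w
    have hσV : inDegVec σ ∈ vertsF edges := (mem_vertsF edges).2 ⟨σ, hσac.1, rfl⟩
    obtain ⟨τ, hτ, hτx⟩ := (mem_vertsF edges).1 (Finset.mem_coe.1 hxV)
    have hle : evalDir w x ≤ evalDir w (inDegVec σ) := by
      rw [← hτx, evalDir_inDegVec, evalDir_inDegVec]
      exact Finset.sum_le_sum fun a _ => hσmax a _ (hτ a)
    rcases eq_or_ne (inDegVec σ) x with h | h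
    · exact ⟨σ, hσac, h⟩
    · exact absurd hle (not_le.2 (hw _ hσV h))
  · rintro _ ⟨σ, hσac, rfl⟩
    obtain ⟨w, hw⟩ := exists_strict_order hσac.2
    refine extremePoint_of_strict_max (w := w) ((mem_vertsF edges).2 ⟨σ, hσac.1, rfl⟩) ?_
    intro v hv hne
    obtain ⟨τ, hτ, rfl⟩ := (mem_vertsF edges).1 hv
    rw [evalDir_inDegVec, evalDir_inDegVec]
    have hτσ : τ ≠ σ := fun h => hne (by rw [h])
    obtain ⟨a0, ha0⟩ := Function.ne_iff.1 hτσ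
    refine Finset.sum_lt_sum (fun a _ => ?_) ⟨a0, Finset.mem_univ _, ?_⟩
    · rcases eq_or_ne (τ a) (σ a) with h | h
      · rw [h]
      · exact (hw a _ (hτ a) h).le
    · exact hw a0 _ (hτ a0) ha0

lemma injOn_inDegVec (edges : ι → Finset I) :
    Set.InjOn (inDegVec : (ι → I) → (I → ℝ)) {σ : ι → I | IsAcyclicHeading edges σ} := by
  intro σ hσ τ hτ heq
  obtain ⟨w, hw⟩ := exists_strict_order hτ.2
  by_contra hne
  obtain ⟨a0, ha0⟩ := Function.ne_iff.1 hne
  have h1 : ∑ a, w (σ a) < ∑ a, w (τ a) := by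
    refine Finset.sum_lt_sum (fun a _ => ?_) ⟨a0, Finset.mem_univ _, hw a0 _ (hσ.1 a0) ha0⟩
    rcases eq_or_ne (σ a) (τ a) with h | h
    · rw [h]
    · exact (hw a _ (hσ.1 a) h).le
  have h2 : ∑ a, w (σ a) = ∑ a, w (τ a) := by
    rw [← evalDir_inDegVec w σ, ← evalDir_inDegVec w τ, heq]
  rw [h2] at h1
  exact lt_irrefl _ h1

lemma acyclic_filter_iff (edges : ι → Finset I) (y : I → ℕ) (σ : ι → I) :
    IsAcyclicHeading (fun a => (edges a).filter (fun i => ∀ j ∈ edges a, y j ≤ y i)) σ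
      ↔ IsAcyclicHeading edges σ ∧ Compatible edges σ y := by
  constructor
  · rintro ⟨hh, hnc⟩
    have hhe : IsHeading edges σ := fun a => (Finset.mem_filter.1 (hh a)).1
    have hcomp : Compatible edges σ y := fun a j hj => (Finset.mem_filter.1 (hh a)).2 j hj
    refine ⟨⟨hhe, ?_⟩, hcomp⟩
    rintro ⟨ℓ, a, hℓ, hcyc⟩
    apply hnc
    refine ⟨ℓ, a, hℓ, ?_⟩
    have h1 : ∀ j < ℓ, y (σ (a j)) ≤ y (σ (a ((j + 1) % ℓ))) := fun j hj =>
      hcomp _ _ (hcyc j hj).1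
    have heq : ∀ j < ℓ, y (σ (a j)) = y (σ (a ((j + 1) % ℓ))) := cyclic_mono_eq hℓ h1
    intro j hj
    refine ⟨Finset.mem_filter.2 ⟨(hcyc j hj).1, fun k hk => ?_⟩, (hcyc j hj).2⟩
    calc y k ≤ y (σ (a ((j + 1) % ℓ))) := hcomp _ _ hk
      _ = y (σ (a j)) := (heq j hj).symm
  · rintro ⟨⟨hhe, hnc⟩, hcomp⟩
    refine ⟨fun a => Finset.mem_filter.2 ⟨hhe a, fun j hj => hcomp a j hj⟩, ?_⟩
    rintro ⟨ℓ, a, hℓ, hcyc⟩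
    exact hnc ⟨ℓ, a, hℓ, fun j hj =>
      ⟨(Finset.mem_filter.1 (hcyc j hj).1).1, (hcyc j hj).2⟩⟩

end Assembly


/-- For a hypergraph `h = (I, E)` and an integer direction
`y ∈ {1,…,m}^I` with associated coloring `c_y(i) = y(i)`, the number of vertices of the
`y`-maximal face `P(h)_y` of the hypergraphic polytope equals the number of acyclic
headings of `h` compatible with `c_y`. -/
theorem stmt13 {I : Type*} [Fintype I] [DecidableEq I] {ι : Type*} [Fintype ι]
    (edges : ι → Finset I) (hE : ∀ a, (edges a).Nonempty) (m : ℕ) (hm : 0 < m)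
    (y : I → ℕ) (hy : ∀ i, y i ∈ Finset.Icc 1 m) :
    (Set.extremePoints ℝ (maxFace (hgPolytope edges) (fun i => (y i : ℝ)))).ncard =
      Set.ncard {σ : ι → I | IsAcyclicHeading edges σ ∧ Compatible edges σ y} := by
  classical
  set yR : I → ℝ := fun i => (y i : ℝ) with hyR
  set edgesY : ι → Finset I := fun a => (edges a).filter (fun i => ∀ j ∈ edges a, y j ≤ y i)
    with hEY
  have hEYne : ∀ a, (edgesY a).Nonempty := by
    intro a
    obtain ⟨i0, hi0, hmax⟩ := Finset.exists_max_image (edges a) (fun i => y i) (hE a)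
    exact ⟨i0, Finset.mem_filter.2 ⟨hi0, hmax⟩⟩
  obtain ⟨σ₀, hσ₀ac, hσ₀max⟩ := exists_acyclic_max edges hE yR
  set M : ℝ := evalDir yR (inDegVec σ₀) with hM
  have hσ₀maxN : ∀ a, ∀ j ∈ edges a, y j ≤ y (σ₀ a) := by
    intro a j hj
    have h := hσ₀max a j hj
    simp only [hyR] at h
    exact_mod_cast h
  have hMle : ∀ v ∈ vertsF edges, evalDir yR v ≤ M := by
    intro v hv
    obtain ⟨τ, hτ, rfl⟩ := (mem_vertsF edges).1 hv
    rw [evalDir_inDegVec, hM, evalDir_inDegVec]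
    exact Finset.sum_le_sum (fun a _ => hσ₀max a (τ a) (hτ a))
  have hMmem : inDegVec σ₀ ∈ vertsF edges := (mem_vertsF edges).2 ⟨σ₀, hσ₀ac.1, rfl⟩
  have hface : maxFace (hgPolytope edges) yR = convexHull ℝ (((vertsF edges).filter
      (fun v => evalDir yR v = M) : Finset (I → ℝ)) : Set (I → ℝ)) := by
    rw [hgPolytope_eq]
    exact maxFace_convexHull hMle ⟨inDegVec σ₀, hMmem, rfl⟩
  have hfil : (vertsF edges).filter (fun v => evalDir yR v = M) = vertsF edgesY := by
    ext v
    rw [Finset.mem_filter]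
    constructor
    · rintro ⟨hv, hev⟩
      obtain ⟨τ, hτ, rfl⟩ := (mem_vertsF edges).1 hv
      have hsumeq : ∑ a, yR (τ a) = ∑ a, yR (σ₀ a) := by
        rw [← evalDir_inDegVec yR τ, ← evalDir_inDegVec yR σ₀, hev]
      have hterm : ∀ a, yR (τ a) = yR (σ₀ a) := by
        intro a
        by_contra hne
        have hlt : ∑ a, yR (τ a) < ∑ a, yR (σ₀ a) :=
          Finset.sum_lt_sum (fun a _ => hσ₀max a _ (hτ a))
            ⟨a, Finset.mem_univ a, lt_of_le_of_ne (hσ₀max a _ (hτ a)) hne⟩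
        rw [hsumeq] at hlt
        exact lt_irrefl _ hlt
      refine (mem_vertsF edgesY).2 ⟨τ, ?_, rfl⟩
      intro a
      rw [hEY]
      refine Finset.mem_filter.2 ⟨hτ a, fun j hj => ?_⟩
      have hc : (y j : ℝ) ≤ (y (τ a) : ℝ) := by
        have := hterm a
        simp only [hyR] at this
        rw [this]
        exact hσ₀max a j hj
      exact_mod_cast hc
    · intro hv
      obtain ⟨τ, hτ, rfl⟩ := (mem_vertsF edgesY).1 hv
      have hτE : IsHeading edges τ := by
        intro a
        have := hτ a
        rw [hEY] at this
        exact (Finset.mem_filter.1 this).1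
      refine ⟨(mem_vertsF edges).2 ⟨τ, hτE, rfl⟩, ?_⟩
      rw [evalDir_inDegVec, hM, evalDir_inDegVec]
      refine Finset.sum_congr rfl (fun a _ => ?_)
      have h1 : yR (τ a) ≤ yR (σ₀ a) := hσ₀max a _ (hτE a)
      have h2 : y (σ₀ a) ≤ y (τ a) := by
        have := hτ a
        rw [hEY] at this
        exact (Finset.mem_filter.1 this).2 _ (hσ₀ac.1 a)
      have h2' : yR (σ₀ a) ≤ yR (τ a) := by
        simp only [hyR]
        exact_mod_cast h2
      exact le_antisymm h1 h2'
  have hsets : {σ : ι → I | IsAcyclicHeading edgesY σ} =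
      {σ : ι → I | IsAcyclicHeading edges σ ∧ Compatible edges σ y} := by
    ext σ
    simp only [Set.mem_setOf_eq, hEY]
    exact acyclic_filter_iff edges y σ
  calc (Set.extremePoints ℝ (maxFace (hgPolytope edges) yR)).ncard
      = (inDegVec '' {σ : ι → I | IsAcyclicHeading edgesY σ}).ncard := by
        rw [hface, hfil, extremePoints_vertsF edgesY hEYne]
    _ = ({σ : ι → I | IsAcyclicHeading edgesY σ}).ncard :=
        Set.ncard_image_of_injOn (injOn_inDegVec edgesY)
    _ = Set.ncard {σ : ι → I | IsAcyclicHeading edges σ ∧ Compatible edges σ y} := by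
        rw [hsets]
end
end

section
/- A polytope P ⊆ R^I is a generalized permutahedron if and only if there exists a submodular function z : 2^I → R with z(∅) = 0 such that P equals the base polytope P(z) = { x ∈ R^I : Σ_{i∈I} x_i = z(I) and Σ_{i∈A} x_i ≤ z(A) for all A ⊆ I }. -/
open Set Pointwise
open scoped Classical

noncomputable section

/-- The (closed) normal cone of a face `F` of `P`. -/
def normalCone {I : Type*} [Fintype I] (P F : Set (I → ℝ)) : Set (I → ℝ) :=
  {y | F ⊆ maxFace P y}

/-- The dimension of a set: the dimension of its affine hull. -/
def dimSet {I : Type*} [Fintype I] (S : Set (I → ℝ)) : ℕ :=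
  Module.finrank ℝ ↥(vectorSpan ℝ S)

/-- The braid cone associated with the total preorder on `I` induced by a weight
function `w : I → ℕ`: all directions `y` that are monotone with respect to `w`. -/
def braidCone {I : Type*} [Fintype I] (w : I → ℕ) : Set (I → ℝ) :=
  {y | ∀ i j, w i ≤ w j → y i ≤ y j}

/-- The braid fan: the collection of all braid cones, i.e. the faces of the braid
arrangement of the hyperplanes `{y | y i = y j}`, `i ≠ j`. -/
def braidFan (I : Type*) [Fintype I] : Set (Set (I → ℝ)) :=
  {C | ∃ w : I → ℕ, C = braidCone w}

/-- A generalized permutahedron: a polytope whose normal fan coarsens the braid fan,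
i.e. every normal cone of a (nonempty) face is a union of braid cones. -/
def IsGenPerm {I : Type*} [Fintype I] (P : Set (I → ℝ)) : Prop :=
  IsPolytope P ∧ ∀ F : Set (I → ℝ), IsExposed ℝ P F → F.Nonempty →
    ∃ W ⊆ braidFan I, normalCone P F = ⋃₀ W

/-- A submodular set function. -/
def Submodular {I : Type*} [DecidableEq I] (z : Finset I → ℝ) : Prop :=
  ∀ A B : Finset I, z (A ∪ B) + z (A ∩ B) ≤ z A + z B

/-- The base polytope of a set function `z`. -/
def basePolytope {I : Type*} [Fintype I] (z : Finset I → ℝ) : Set (I → ℝ) :=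
  {x | ∑ i, x i = z Finset.univ ∧ ∀ T : Finset I, ∑ i ∈ T, x i ≤ z T}

namespace Stmt15Aux

variable {I : Type*} [Fintype I] [DecidableEq I]

/-- The indicator vector of a finite set. -/
def ind (A : Finset I) : I → ℝ := fun i => if i ∈ A then 1 else 0

lemma evalDir_ind (A : Finset I) (x : I → ℝ) : evalDir (ind A) x = ∑ i ∈ A, x i := by
  unfold evalDir ind
  simp only [ite_mul, one_mul, zero_mul]
  rw [Finset.sum_ite_mem, Finset.univ_inter]

lemma isLinearMap_evalDir (y : I → ℝ) : IsLinearMap ℝ (evalDir y) := by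
  constructor
  · intro x x'
    unfold evalDir
    simp [mul_add, Finset.sum_add_distrib]
  · intro c x
    unfold evalDir
    simp only [Pi.smul_apply, smul_eq_mul, Finset.mul_sum]
    exact Finset.sum_congr rfl fun i _ => by ring

/-- `evalDir y` as a continuous linear map. -/
def evalCLM (y : I → ℝ) : (I → ℝ) →L[ℝ] ℝ :=
  LinearMap.toContinuousLinearMap ((isLinearMap_evalDir y).mk' _)

lemma evalCLM_apply (y x : I → ℝ) : evalCLM y x = evalDir y x := rfl

lemma isExposed_maxFace (P : Set (I → ℝ)) (y : I → ℝ) : IsExposed ℝ P (maxFace P y) :=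
  fun _ => ⟨evalCLM y, rfl⟩

lemma hull_le {V : Finset (I → ℝ)} {x : I → ℝ}
    (hx : x ∈ convexHull ℝ (V : Set (I → ℝ))) (y : I → ℝ) {M : ℝ}
    (hM : ∀ v ∈ V, evalDir y v ≤ M) : evalDir y x ≤ M :=
  convexHull_min (fun v hv => hM v hv) (convex_halfSpace_le (isLinearMap_evalDir y) M) hx

/-- The level function of a direction `y`. -/
def wlev (y : I → ℝ) : I → ℕ := fun i => (Finset.univ.filter fun j => y j ≤ y i).card

lemma wlev_le_iff (y : I → ℝ) (i j : I) : wlev y i ≤ wlev y j ↔ y i ≤ y j := by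
  constructor
  · intro h
    by_contra hij
    push_neg at hij
    have hsub : (Finset.univ.filter fun k => y k ≤ y j) ⊂ Finset.univ.filter fun k => y k ≤ y i := by
      constructor
      · intro k hk
        simp only [Finset.mem_filter, Finset.mem_univ, true_and] at hk ⊢
        exact hk.trans hij.le
      · intro hcon
        have : i ∈ Finset.univ.filter fun k => y k ≤ y i := by
          simp [Finset.mem_filter]
        have := hcon this
        simp only [Finset.mem_filter, Finset.mem_univ, true_and] at this
        exact absurd this (not_le.mpr hij)
    exact absurd h (not_le.mpr (Finset.card_lt_card hsub))
  · intro h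
    apply Finset.card_le_card
    intro k hk
    simp only [Finset.mem_filter, Finset.mem_univ, true_and] at hk ⊢
    exact hk.trans h

end Stmt15Aux
namespace Stmt15Aux

variable {I : Type*} [Fintype I] [DecidableEq I]

/-- **Key lemma**: for the base polytope of a submodular function, any maximizer of `y`
also maximizes every direction `y'` compatible with (the preorder of) `y`. -/
theorem maxFace_mono (z : Finset I → ℝ) (hsub : Submodular z) (hz0 : z ∅ = 0)
    (y y' : I → ℝ) (hc : ∀ i j, y i ≤ y j → y' i ≤ y' j)
    {x : I → ℝ} (hx : x ∈ maxFace (basePolytope z) y) :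
    x ∈ maxFace (basePolytope z) y' := by
  classical
  obtain ⟨hxP, hxmax⟩ := hx
  rcases isEmpty_or_nonempty I with hI | hI
  · refine ⟨hxP, fun x' hx' => ?_⟩
    unfold evalDir
    rw [Finset.univ_eq_empty]
    simp
  inhabit I
  -- a list of all elements of I, sorted by decreasing y-value
  haveI : IsTotal I (fun a b => y b ≤ y a) := ⟨fun a b => le_total (y b) (y a)⟩
  haveI : IsTrans I (fun a b => y b ≤ y a) := ⟨fun a b c h1 h2 => le_trans h2 h1⟩
  set l : List I := List.insertionSort (fun a b => y b ≤ y a) Finset.univ.toList with hl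
  have hperm := List.perm_insertionSort (fun a b => y b ≤ y a) Finset.univ.toList
  have hnodup : l.Nodup := (hperm.nodup_iff).mpr (Finset.nodup_toList _)
  have hmem : ∀ i : I, i ∈ l := fun i => (hperm.mem_iff).mpr (by simp)
  have hsorted : l.Pairwise (fun a b => y b ≤ y a) :=
    List.pairwise_insertionSort (fun a b => y b ≤ y a) _
  set n := l.length with hn
  have hn1 : 0 < n := List.length_pos_iff.mpr (fun h => by simpa [h] using hmem default)
  set el : ℕ → I := fun t => l.getD t default with hel
  have helget : ∀ t (ht : t < n), el t = l[t] := fun t ht => List.getD_eq_getElem l default ht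
  -- prefixes
  set S : ℕ → Finset I := fun t => (l.take t).toFinset with hS
  have hS0 : S 0 = ∅ := by simp [hS]
  have hSn : S n = Finset.univ := by
    apply Finset.eq_univ_iff_forall.mpr
    intro i
    simp only [hS, List.mem_toFinset, hn, List.take_length]
    exact hmem i
  have hins : ∀ t, t < n → S (t + 1) = insert (el t) (S t) := by
    intro t ht
    simp only [hS]
    rw [List.take_succ, List.getElem?_eq_getElem ht, List.toFinset_append]
    rw [helget t ht]
    ext a; simp [or_comm]
  have hni : ∀ t, t < n → el t ∉ S t := by
    intro t ht hmem'
    have h1 : el t ∈ l.take t := by simpa [hS] using hmem'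
    have h2 : el t ∈ l.drop t := by
      rw [List.drop_eq_getElem_cons ht, helget t ht]
      exact List.mem_cons_self
    exact List.disjoint_take_drop hnodup le_rfl h1 h2
  have hidx : ∀ t, t < n → l.idxOf (el t) = t := by
    intro t ht
    rw [helget t ht]
    exact List.Nodup.idxOf_getElem hnodup t ht
  -- sums over prefixes
  have hsum_take : ∀ (F : I → ℝ) (t : ℕ), t ≤ n →
      ∑ i ∈ S t, F i = ∑ s ∈ Finset.range t, F (el s) := by
    intro F t
    induction t with
    | zero => intro _; simp [hS0]
    | succ t ih =>
      intro ht
      have ht' : t < n := Nat.lt_of_succ_le ht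
      rw [hins t ht', Finset.sum_insert (hni t ht'), Finset.sum_range_succ,
        ih (le_of_lt ht')]
      ring
  have hsum_univ : ∀ F : I → ℝ, ∑ i, F i = ∑ s ∈ Finset.range n, F (el s) := by
    intro F
    rw [← hSn]
    exact hsum_take F n le_rfl
  -- the greedy point
  set g : I → ℝ := fun i => z (S (l.idxOf i + 1)) - z (S (l.idxOf i)) with hg
  have hgat : ∀ t, t < n → g (el t) = z (S (t + 1)) - z (S t) := by
    intro t ht
    simp only [hg, hidx t ht]
  have htight : ∀ t, t ≤ n → ∑ i ∈ S t, g i = z (S t) := by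
    intro t
    induction t with
    | zero => intro _; simp [hS0, hz0]
    | succ t ih =>
      intro ht
      have ht' : t < n := Nat.lt_of_succ_le ht
      rw [hins t ht', Finset.sum_insert (hni t ht'), ih (le_of_lt ht'), hgat t ht',
        ← hins t ht']
      ring
  have hfeasaux : ∀ t, t ≤ n → ∀ T : Finset I, T ⊆ S t → ∑ i ∈ T, g i ≤ z T := by
    intro t
    induction t with
    | zero =>
      intro _ T hT
      rw [hS0, Finset.subset_empty] at hT
      subst hT
      simp [hz0]
    | succ t ih =>
      intro ht T hT
      have ht' : t < n := Nat.lt_of_succ_le ht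
      rw [hins t ht'] at hT
      by_cases hmemT : el t ∈ T
      · have herase : T.erase (el t) ⊆ S t := by
          intro a ha
          rcases Finset.mem_erase.mp ha with ⟨hne, haT⟩
          rcases Finset.mem_insert.mp (hT haT) with h | h
          · exact absurd h hne
          · exact h
        have hU : S t ∪ T = S (t + 1) := by
          apply Finset.Subset.antisymm
          · rw [hins t ht']
            intro a ha
            rcases Finset.mem_union.mp ha with h | h
            · exact Finset.mem_insert_of_mem h
            · exact hT h
          · rw [hins t ht']
            intro a ha
            rcases Finset.mem_insert.mp ha with h | h
            · exact Finset.mem_union_right _ (h ▸ hmemT)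
            · exact Finset.mem_union_left _ h
        have hInt : S t ∩ T = T.erase (el t) := by
          ext a
          simp only [Finset.mem_inter, Finset.mem_erase]
          constructor
          · rintro ⟨h1, h2⟩
            refine ⟨fun hcon => ?_, h2⟩
            exact hni t ht' (hcon ▸ h1)
          · rintro ⟨h1, h2⟩
            refine ⟨?_, h2⟩
            rcases Finset.mem_insert.mp (hT h2) with h | h
            · exact absurd h h1
            · exact h
        have hsubm := hsub (S t) T
        rw [hU, hInt] at hsubm
        have hih := ih (le_of_lt ht') (T.erase (el t)) herase
        have hsumT : ∑ i ∈ T, g i = g (el t) + ∑ i ∈ T.erase (el t), g i :=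
          (Finset.add_sum_erase T g hmemT).symm
        rw [hsumT, hgat t ht']
        have hzt := htight t (le_of_lt ht')
        linarith
      · have : T ⊆ S t := fun a ha => by
          rcases Finset.mem_insert.mp (hT ha) with h | h
          · exact absurd (h ▸ ha) hmemT
          · exact h
        exact ih (le_of_lt ht') T this
  have hgP : g ∈ basePolytope z := by
    constructor
    · rw [← hSn] at *
      rw [htight n le_rfl]
    · intro T
      exact hfeasaux n le_rfl T (by rw [hSn]; exact Finset.subset_univ T)
  -- summation by parts representation
  have hrepr : ∀ w v : I → ℝ, evalDir w v
      = w (el (n - 1)) * (∑ i, v i)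
        - ∑ t ∈ Finset.range (n - 1), (w (el (t + 1)) - w (el t)) * (∑ i ∈ S (t + 1), v i) := by
    intro w v
    have h1 : evalDir w v = ∑ s ∈ Finset.range n,
        (fun t => w (el t)) s • (fun t => v (el t)) s := by
      simpa [smul_eq_mul, evalDir] using hsum_univ (fun i => w i * v i)
    rw [h1, Finset.sum_range_by_parts]
    rw [← hsum_univ v]
    simp only [smul_eq_mul]
    congr 1
    apply Finset.sum_congr rfl
    intro t ht
    have ht' : t + 1 ≤ n := by
      have := Finset.mem_range.mp ht
      omega
    rw [hsum_take v (t + 1) ht']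
  have hdiff : ∀ (w v : I → ℝ), v ∈ basePolytope z → evalDir w v - evalDir w g
      = - ∑ t ∈ Finset.range (n - 1),
          (w (el (t + 1)) - w (el t)) * (∑ i ∈ S (t + 1), v i - z (S (t + 1))) := by
    intro w v hv
    have e1 : ∑ i, v i = z Finset.univ := hv.1
    have e2 : ∑ i, g i = z Finset.univ := hgP.1
    rw [hrepr w v, hrepr w g, e1, e2]
    have e3 : ∀ t ∈ Finset.range (n - 1),
        (w (el (t + 1)) - w (el t)) * (∑ i ∈ S (t + 1), v i - z (S (t + 1)))
        = (w (el (t + 1)) - w (el t)) * (∑ i ∈ S (t + 1), v i)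
          - (w (el (t + 1)) - w (el t)) * (∑ i ∈ S (t + 1), g i) := by
      intro t ht
      have ht' : t + 1 ≤ n := by
        have := Finset.mem_range.mp ht
        omega
      rw [htight (t + 1) ht']
      ring
    rw [Finset.sum_congr rfl e3, Finset.sum_sub_distrib]
    ring
  -- the slack of each prefix constraint is nonpositive
  have hslack : ∀ (v : I → ℝ), v ∈ basePolytope z → ∀ t ∈ Finset.range (n - 1),
      ∑ i ∈ S (t + 1), v i - z (S (t + 1)) ≤ 0 :=
    fun v hv t _ => sub_nonpos.mpr (hv.2 (S (t + 1)))
  -- decreasing along the list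
  have hdec : ∀ t, t + 1 < n → y (el (t + 1)) ≤ y (el t) := by
    intro t ht
    have h1 : (⟨t, Nat.lt_of_succ_lt ht⟩ : Fin l.length) < ⟨t + 1, ht⟩ :=
      Fin.mk_lt_mk.mpr (Nat.lt_succ_self t)
    have := hsorted.rel_get_of_lt h1
    simpa [List.get_eq_getElem, helget t (Nat.lt_of_succ_lt ht), helget (t + 1) ht] using this
  have hdec' : ∀ t, t + 1 < n → y' (el (t + 1)) ≤ y' (el t) :=
    fun t ht => hc _ _ (hdec t ht)
  -- weak duality
  have hweak : ∀ (w : I → ℝ), (∀ t, t + 1 < n → w (el (t + 1)) ≤ w (el t)) →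
      ∀ v ∈ basePolytope z, evalDir w v ≤ evalDir w g := by
    intro w hw v hv
    have hd := hdiff w v hv
    have hterm : ∀ t ∈ Finset.range (n - 1),
        0 ≤ (w (el (t + 1)) - w (el t)) * (∑ i ∈ S (t + 1), v i - z (S (t + 1))) := by
      intro t ht
      have ht' : t + 1 < n := by
        have := Finset.mem_range.mp ht
        omega
      have h1 : w (el (t + 1)) - w (el t) ≤ 0 := sub_nonpos.mpr (hw t ht')
      have h2 := hslack v hv t ht
      nlinarith
    have := Finset.sum_nonneg hterm
    linarith
  have hxg : evalDir y x = evalDir y g :=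
    le_antisymm (hweak y hdec x hxP) (hxmax g hgP)
  -- complementary slackness
  have hzero : ∀ t ∈ Finset.range (n - 1),
      (y (el (t + 1)) - y (el t)) * (∑ i ∈ S (t + 1), x i - z (S (t + 1))) = 0 := by
    have hd := hdiff y x hxP
    have hsum0 : ∑ t ∈ Finset.range (n - 1),
        (y (el (t + 1)) - y (el t)) * (∑ i ∈ S (t + 1), x i - z (S (t + 1))) = 0 := by
      linarith
    refine (Finset.sum_eq_zero_iff_of_nonneg ?_).mp hsum0
    intro t ht
    have ht' : t + 1 < n := by
      have := Finset.mem_range.mp ht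
      omega
    have h1 : y (el (t + 1)) - y (el t) ≤ 0 := sub_nonpos.mpr (hdec t ht')
    have h2 := hslack x hxP t ht
    nlinarith
  have hzero' : ∀ t ∈ Finset.range (n - 1),
      (y' (el (t + 1)) - y' (el t)) * (∑ i ∈ S (t + 1), x i - z (S (t + 1))) = 0 := by
    intro t ht
    by_cases hsl : ∑ i ∈ S (t + 1), x i - z (S (t + 1)) = 0
    · rw [hsl, mul_zero]
    · have h0 := hzero t ht
      rcases mul_eq_zero.mp h0 with h | h
      · have hyeq : y (el (t + 1)) = y (el t) := by linarith [sub_eq_zero.mp h]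
        have h1 : y' (el (t + 1)) ≤ y' (el t) := hc _ _ (le_of_eq hyeq)
        have h2 : y' (el t) ≤ y' (el (t + 1)) := hc _ _ (ge_of_eq hyeq)
        have : y' (el (t + 1)) - y' (el t) = 0 := by linarith
        rw [this, zero_mul]
      · exact absurd h hsl
  have hy'x : evalDir y' x = evalDir y' g := by
    have hd := hdiff y' x hxP
    rw [Finset.sum_eq_zero hzero'] at hd
    linarith
  refine ⟨hxP, fun x' hx' => ?_⟩
  rw [hy'x]
  exact hweak y' hdec' x' hx'

end Stmt15Aux
namespace Stmt15Aux

variable {I : Type*} [Fintype I] [DecidableEq I]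

/-- The fan-coarsening property propagates along compatible directions. -/
lemma normalCone_compat {P : Set (I → ℝ)}
    (hfan : ∀ F : Set (I → ℝ), IsExposed ℝ P F → F.Nonempty →
      ∃ W ⊆ braidFan I, normalCone P F = ⋃₀ W)
    {F : Set (I → ℝ)} (hF : IsExposed ℝ P F) (hFne : F.Nonempty)
    {y y' : I → ℝ} (hy : y ∈ normalCone P F)
    (hc : ∀ i j, y i ≤ y j → y' i ≤ y' j) : y' ∈ normalCone P F := by
  obtain ⟨W, hWb, hWeq⟩ := hfan F hF hFne
  rw [hWeq] at hy ⊢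
  obtain ⟨C, hCW, hyC⟩ := hy
  obtain ⟨w, rfl⟩ := hWb hCW
  exact ⟨_, hCW, fun i j hij => hc i j (hyC i j hij)⟩

lemma forward_dir {P : Set (I → ℝ)} (V : Finset (I → ℝ)) (hVne : V.Nonempty)
    (hPV : P = convexHull ℝ (V : Set (I → ℝ)))
    (hfan : ∀ F : Set (I → ℝ), IsExposed ℝ P F → F.Nonempty →
      ∃ W ⊆ braidFan I, normalCone P F = ⋃₀ W) :
    ∃ z : Finset I → ℝ, Submodular z ∧ z ∅ = 0 ∧ P = basePolytope z := by
  classical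
  set z : Finset I → ℝ := fun A => V.sup' hVne (fun v => ∑ i ∈ A, v i) with hz
  have hVP : ∀ v ∈ V, v ∈ P := by
    intro v hv
    rw [hPV]
    exact subset_convexHull ℝ _ hv
  have hPne : P.Nonempty := ⟨hVne.choose, hVP _ hVne.choose_spec⟩
  -- z A bounds ∑_{i ∈ A} x i over P
  have hzle : ∀ (A : Finset I), ∀ x ∈ P, ∑ i ∈ A, x i ≤ z A := by
    intro A x hx
    rw [← evalDir_ind]
    apply hull_le (hPV ▸ hx) (ind A)
    intro v hv
    rw [evalDir_ind]
    exact Finset.le_sup' (fun v => ∑ i ∈ A, v i) hv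
  have hzatt : ∀ A : Finset I, ∃ v ∈ P, ∑ i ∈ A, v i = z A := by
    intro A
    obtain ⟨v, hv, hveq⟩ := Finset.exists_mem_eq_sup' hVne (fun v => ∑ i ∈ A, v i)
    exact ⟨v, hVP v hv, hveq.symm⟩
  -- every direction has a maximizer
  have hattain : ∀ y : I → ℝ, ∃ x₀, x₀ ∈ maxFace P y := by
    intro y
    obtain ⟨v, hv, hveq⟩ := Finset.exists_mem_eq_sup' hVne (evalDir y)
    refine ⟨v, hVP v hv, fun x' hx' => ?_⟩
    rw [← hveq]
    apply hull_le (hPV ▸ hx') y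
    intro u hu
    exact Finset.le_sup' (evalDir y) hu
  -- maximizer of max-face-of-P, z values attained at any maxFace point
  have hmax_ind : ∀ (y : I → ℝ) (A : Finset I), (∀ i j, y i ≤ y j → ind A i ≤ ind A j) →
      ∀ x₀ ∈ maxFace P y, ∑ i ∈ A, x₀ i = z A := by
    intro y A hcA x₀ hx₀
    have hyn : y ∈ normalCone P (maxFace P y) := fun u hu => hu
    have hFne : (maxFace P y).Nonempty := hattain y
    have h1 : ind A ∈ normalCone P (maxFace P y) :=
      normalCone_compat hfan (isExposed_maxFace P y) hFne hyn hcA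
    have h2 : x₀ ∈ maxFace P (ind A) := h1 hx₀
    obtain ⟨v, hvP, hveq⟩ := hzatt A
    have h3 : evalDir (ind A) v ≤ evalDir (ind A) x₀ := h2.2 v hvP
    rw [evalDir_ind, evalDir_ind] at h3
    exact le_antisymm (hzle A x₀ h2.1) (hveq ▸ h3)
  -- the coordinate-sum is constant on P, equal to z univ
  have hsum_const : ∀ x ∈ P, ∑ i, x i = z Finset.univ := by
    have hPP : IsExposed ℝ P P := fun _ => ⟨0, by ext u; simp⟩
    have h0 : (0 : I → ℝ) ∈ normalCone P P := by
      intro u hu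
      refine ⟨hu, fun x' hx' => ?_⟩
      unfold evalDir
      simp
    have h1 : ind Finset.univ ∈ normalCone P P :=
      normalCone_compat hfan hPP hPne h0 (fun i j _ => by simp [ind])
    intro x hx
    obtain ⟨v, hvP, hveq⟩ := hzatt Finset.univ
    have h2 : evalDir (ind Finset.univ) v ≤ evalDir (ind Finset.univ) x := (h1 hx).2 v hvP
    have h3 : evalDir (ind Finset.univ) x ≤ evalDir (ind Finset.univ) v := (h1 hvP).2 x hx
    rw [evalDir_ind, evalDir_ind] at h2 h3
    have : ∑ i ∈ Finset.univ, x i = z Finset.univ := by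
      rw [← hveq]
      exact le_antisymm h3 h2
    simpa using this
  refine ⟨z, ?_, ?_, ?_⟩
  · -- Submodular
    intro A B
    set y : I → ℝ := fun i => ind (A ∪ B) i + ind (A ∩ B) i with hy
    obtain ⟨x₀, hx₀⟩ := hattain y
    have hAB : ∀ i, i ∈ A ∩ B → i ∈ A ∪ B := fun i hi =>
      Finset.mem_union_left _ (Finset.mem_inter.mp hi).1
    have hcU : ∀ i j, y i ≤ y j → ind (A ∪ B) i ≤ ind (A ∪ B) j := by
      intro i j hij
      simp only [hy, ind] at hij ⊢
      by_cases h1 : i ∈ A ∪ B <;> by_cases h2 : i ∈ A ∩ B <;>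
        by_cases h3 : j ∈ A ∪ B <;> by_cases h4 : j ∈ A ∩ B <;>
        simp only [h1, h2, h3, h4, if_true, if_false] at hij ⊢ <;>
        first
          | linarith
          | exact absurd (hAB _ h2) h1
          | exact absurd (hAB _ h4) h3
    have hcI : ∀ i j, y i ≤ y j → ind (A ∩ B) i ≤ ind (A ∩ B) j := by
      intro i j hij
      simp only [hy, ind] at hij ⊢
      by_cases h1 : i ∈ A ∪ B <;> by_cases h2 : i ∈ A ∩ B <;>
        by_cases h3 : j ∈ A ∪ B <;> by_cases h4 : j ∈ A ∩ B <;>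
        simp only [h1, h2, h3, h4, if_true, if_false] at hij ⊢ <;>
        first
          | linarith
          | exact absurd (hAB _ h2) h1
          | exact absurd (hAB _ h4) h3
    have e1 : ∑ i ∈ A ∪ B, x₀ i = z (A ∪ B) := hmax_ind y (A ∪ B) hcU x₀ hx₀
    have e2 : ∑ i ∈ A ∩ B, x₀ i = z (A ∩ B) := hmax_ind y (A ∩ B) hcI x₀ hx₀
    have e3 : ∑ i ∈ A ∪ B, x₀ i + ∑ i ∈ A ∩ B, x₀ i = ∑ i ∈ A, x₀ i + ∑ i ∈ B, x₀ i :=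
      Finset.sum_union_inter
    have e4 := hzle A x₀ hx₀.1
    have e5 := hzle B x₀ hx₀.1
    linarith
  · -- z ∅ = 0
    simp [hz]
  · -- P = basePolytope z
    apply Set.Subset.antisymm
    · intro x hx
      exact ⟨hsum_const x hx, fun T => hzle T x hx⟩
    · intro x hx
      by_contra hxP
      -- separate x from P
      have hPcl : IsClosed P := by
        rw [hPV]
        exact (Set.Finite.isCompact_convexHull ℝ (V.finite_toSet)).isClosed
      have hPcv : Convex ℝ P := hPV ▸ convex_convexHull ℝ _
      obtain ⟨f, u, hfu, hux⟩ := geometric_hahn_banach_closed_point hPcv hPcl hxP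
      set y : I → ℝ := fun i => f (fun j => if i = j then 1 else 0) with hy
      have hfy : ∀ v : I → ℝ, f v = evalDir y v := by
        intro v
        conv_lhs => rw [pi_eq_sum_univ v]
        rw [map_sum]
        unfold evalDir
        apply Finset.sum_congr rfl
        intro i _
        rw [map_smul]
        simp [hy, mul_comm]
      -- the key induction: for every direction, the maximum over P dominates x
      have hmain : ∀ (k : ℕ) (w : I → ℝ), (Finset.image w Finset.univ).card ≤ k →
          ∃ x₀ ∈ P, (∀ x' ∈ P, evalDir w x' ≤ evalDir w x₀) ∧ evalDir w x ≤ evalDir w x₀ := by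
        intro k
        induction k with
        | zero =>
          intro w hw
          have : Finset.image w Finset.univ = ∅ := Finset.card_eq_zero.mp (Nat.le_zero.mp hw)
          have hIe : (Finset.univ : Finset I) = ∅ := by
            by_contra hne
            obtain ⟨i, hi⟩ := Finset.nonempty_of_ne_empty hne
            exact absurd (Finset.mem_image_of_mem w hi) (by rw [this]; exact Finset.notMem_empty _)
          obtain ⟨x₀, hx₀P⟩ := hPne
          refine ⟨x₀, hx₀P, ?_, ?_⟩ <;>
            · intros <;> unfold evalDir <;> rw [hIe] <;> simp
        | succ k ih =>
          intro w hw
          by_cases hconst : ∀ i j : I, w i = w j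
          · -- constant direction: evalDir w is constant on P ∪ {x}
            obtain ⟨x₀, hx₀P⟩ := hPne
            rcases isEmpty_or_nonempty I with hI | hI
            · refine ⟨x₀, hx₀P, ?_, ?_⟩ <;>
                · intros <;> unfold evalDir <;> rw [Finset.univ_eq_empty] <;> simp
            · obtain ⟨i₀⟩ := hI
              have hval : ∀ v ∈ P, evalDir w v = w i₀ * z Finset.univ := by
                intro v hv
                unfold evalDir
                rw [show ∑ i, w i * v i = ∑ i, w i₀ * v i from
                  Finset.sum_congr rfl fun i _ => by rw [hconst i i₀]]
                rw [← Finset.mul_sum, hsum_const v hv]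
              have hvalx : evalDir w x = w i₀ * z Finset.univ := by
                unfold evalDir
                rw [show ∑ i, w i * x i = ∑ i, w i₀ * x i from
                  Finset.sum_congr rfl fun i _ => by rw [hconst i i₀]]
                rw [← Finset.mul_sum, hx.1]
              refine ⟨x₀, hx₀P, fun x' hx' => ?_, ?_⟩
              · rw [hval x' hx', hval x₀ hx₀P]
              · rw [hvalx, hval x₀ hx₀P]
          · -- non-constant direction
            push_neg at hconst
            obtain ⟨i₁, j₁, hij₁⟩ := hconst
            haveI : Nonempty I := ⟨i₁⟩
            have hune : (Finset.univ : Finset I).Nonempty := Finset.univ_nonempty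
            set M : ℝ := Finset.univ.sup' hune w with hM
            have hwM : ∀ i, w i ≤ M := fun i => Finset.le_sup' w (Finset.mem_univ i)
            set A : Finset I := Finset.univ.filter (fun i => w i = M) with hA
            set B : Finset I := Finset.univ.filter (fun i => w i ≠ M) with hB
            have hBne : B.Nonempty := by
              rcases eq_or_ne (w i₁) M with h | h
              · exact ⟨j₁, by simp [hB, Finset.mem_filter]; intro hc; exact hij₁ (by rw [h, hc])⟩
              · exact ⟨i₁, by simp [hB, Finset.mem_filter, h]⟩
            set m : ℝ := B.sup' hBne w with hm
            have hmM : m < M := by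
              obtain ⟨i₂, hi₂B, hi₂⟩ := Finset.exists_mem_eq_sup' hBne w
              have hne : w i₂ ≠ M := (Finset.mem_filter.mp hi₂B).2
              rw [show m = w i₂ from hi₂]
              exact lt_of_le_of_ne (hwM i₂) hne
            have hwB : ∀ i, w i ≠ M → w i ≤ m :=
              fun i h => Finset.le_sup' w (Finset.mem_filter.mpr ⟨Finset.mem_univ i, h⟩)
            set w₁ : I → ℝ := fun i => min (w i) m with hw₁
            -- image cardinality decreases
            have himg : Finset.image w₁ Finset.univ ⊆ (Finset.image w Finset.univ).erase M := by
              intro v hv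
              obtain ⟨i, _, hiv⟩ := Finset.mem_image.mp hv
              rcases eq_or_ne (w i) M with h | h
              · obtain ⟨i₂, hi₂B, hi₂⟩ := Finset.exists_mem_eq_sup' hBne w
                have hvm : v = m := by
                  rw [← hiv]
                  simp only [hw₁]
                  rw [h]
                  exact min_eq_right hmM.le
                refine Finset.mem_erase.mpr ⟨by rw [hvm]; exact hmM.ne, ?_⟩
                rw [hvm, show m = w i₂ from hi₂]
                exact Finset.mem_image_of_mem w (Finset.mem_univ i₂)
              · have hvw : v = w i := by
                  rw [← hiv]
                  simp only [hw₁]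
                  exact min_eq_left (hwB i h)
                refine Finset.mem_erase.mpr ⟨by rw [hvw]; exact h, ?_⟩
                rw [hvw]
                exact Finset.mem_image_of_mem w (Finset.mem_univ i)
            have hMmem : M ∈ Finset.image w Finset.univ := by
              obtain ⟨i₂, _, hi₂⟩ := Finset.exists_mem_eq_sup' hune w
              rw [show M = w i₂ from hi₂]
              exact Finset.mem_image_of_mem w (Finset.mem_univ i₂)
            have hcard : (Finset.image w₁ Finset.univ).card ≤ k := by
              calc (Finset.image w₁ Finset.univ).card
                  ≤ ((Finset.image w Finset.univ).erase M).card := Finset.card_le_card himg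
                _ = (Finset.image w Finset.univ).card - 1 := Finset.card_erase_of_mem hMmem
                _ ≤ (k + 1) - 1 := Nat.sub_le_sub_right hw 1
                _ = k := rfl
            obtain ⟨x₁, hx₁P, hx₁max, hx₁ge⟩ := ih w₁ hcard
            obtain ⟨x₀, hx₀⟩ := hattain w
            have hFne : (maxFace P w).Nonempty := ⟨x₀, hx₀⟩
            have hwn : w ∈ normalCone P (maxFace P w) := fun u hu => hu
            -- compatibility
            have hcw₁ : ∀ i j, w i ≤ w j → w₁ i ≤ w₁ j :=
              fun i j h => min_le_min h le_rfl
            have hcA : ∀ i j, w i ≤ w j → ind A i ≤ ind A j := by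
              intro i j h
              by_cases hiA : i ∈ A
              · have : w i = M := (Finset.mem_filter.mp hiA).2
                have hjA : j ∈ A := Finset.mem_filter.mpr
                  ⟨Finset.mem_univ j, le_antisymm (hwM j) (this ▸ h)⟩
                simp [ind, hiA, hjA]
              · simp only [ind, hiA, if_false]
                by_cases hjA : j ∈ A <;> simp [hjA]
            have h1 : w₁ ∈ normalCone P (maxFace P w) :=
              normalCone_compat hfan (isExposed_maxFace P w) hFne hwn hcw₁
            have hx₀w₁ : x₀ ∈ maxFace P w₁ := h1 hx₀
            have hzA : ∑ i ∈ A, x₀ i = z A := hmax_ind w A hcA x₀ hx₀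
            -- decomposition w = w₁ + (M - m) · ind A
            have hdecomp : ∀ i, w i = w₁ i + (M - m) * ind A i := by
              intro i
              by_cases hiA : i ∈ A
              · have hwi : w i = M := (Finset.mem_filter.mp hiA).2
                simp only [hw₁, ind, hiA, if_true, hwi, min_eq_right hmM.le]
                ring
              · have hwi : w i ≠ M := fun h =>
                  hiA (Finset.mem_filter.mpr ⟨Finset.mem_univ i, h⟩)
                simp only [hw₁, ind, hiA, if_false, min_eq_left (hwB i hwi)]
                ring
            have hsplit : ∀ v : I → ℝ,
                evalDir w v = evalDir w₁ v + (M - m) * evalDir (ind A) v := by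
              intro v
              unfold evalDir
              rw [Finset.mul_sum, ← Finset.sum_add_distrib]
              apply Finset.sum_congr rfl
              intro i _
              rw [hdecomp i]
              ring
            refine ⟨x₀, hx₀.1, hx₀.2, ?_⟩
            have c1 : evalDir w₁ x ≤ evalDir w₁ x₀ := le_trans (hx₁ge) (hx₀w₁.2 x₁ hx₁P)
            have c2 : evalDir (ind A) x ≤ evalDir (ind A) x₀ := by
              rw [evalDir_ind, evalDir_ind, hzA]
              exact hx.2 A
            have c3 : (M - m) * evalDir (ind A) x ≤ (M - m) * evalDir (ind A) x₀ :=
              mul_le_mul_of_nonneg_left c2 (by linarith)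
            rw [hsplit x, hsplit x₀]
            linarith
      obtain ⟨x₀, hx₀P, _, hge⟩ :=
        hmain (Finset.image y Finset.univ).card y le_rfl
      have h1 : evalDir y x₀ < u := by rw [← hfy]; exact hfu x₀ hx₀P
      have h2 : u < evalDir y x := by rw [← hfy]; exact hux
      linarith

end Stmt15Aux

open Stmt15Aux in
/-- A polytope `P ⊆ ℝ^I` is a generalized permutahedron if and only if
it is the base polytope of a submodular function `z : 2^I → ℝ` with `z(∅) = 0`. -/
theorem stmt15 {I : Type*} [Fintype I] [DecidableEq I] (P : Set (I → ℝ))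
    (hP : IsPolytope P) :
    IsGenPerm P ↔ ∃ z : Finset I → ℝ, Submodular z ∧ z ∅ = 0 ∧ P = basePolytope z := by
  constructor
  · rintro ⟨-, hfan⟩
    obtain ⟨V, hVne, hPV⟩ := hP
    exact forward_dir V hVne hPV hfan
  · rintro ⟨z, hsub, hz0, hPz⟩
    subst hPz
    refine ⟨hP, fun F _ _ => ?_⟩
    refine ⟨{C | C ∈ braidFan I ∧ C ⊆ normalCone (basePolytope z) F},
      fun C hC => hC.1, ?_⟩
    apply Set.Subset.antisymm
    · intro y hy
      refine ⟨braidCone (wlev y), ⟨⟨wlev y, rfl⟩, ?_⟩, ?_⟩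
      · intro y' hy'
        intro x hxF
        refine maxFace_mono z hsub hz0 y y' ?_ (hy hxF)
        intro i j hij
        exact hy' i j ((wlev_le_iff y i j).mpr hij)
      · intro i j hw
        exact (wlev_le_iff y i j).mp hw
    · rintro y ⟨C, ⟨-, hCsub⟩, hyC⟩
      exact hCsub hyC
end
end

section
/- Let z : 2^I → R be a submodular function with z(∅) = 0, let (T_1,…,T_k) be a composition of I, and let ∅ = C_0 ⊂ C_1 ⊂ … ⊂ C_n = I (n = |I|) be a maximal chain in the Boolean lattice 2^I containing the sets T_1, T_1 ∪ T_2, …, T_1 ∪ … ∪ T_k. Define the greedy point x̃ ∈ R^I by x̃_{i_j} = z(C_j) - z(C_{j-1}), where i_j is the unique element of C_j \ C_{j-1}. Then: (i) x̃(C_j) = z(C_j) for all j and x̃ lies in the base polytope P(z); and (ii) for every direction y in the braid cone B_{T_1,…,T_k}, the point x̃ maximizes y over P(z), i.e., y(x̃) ≥ y(x) for all x ∈ P(z). -/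
/-!
Along the chain, `x̃` is the output of the greedy algorithm. Submodularity says that marginal
gains shrink on subsets, `z(C_{j+1}) - z(C_j) ≤ z(T ∩ C_{j+1}) - z(T ∩ C_j)`, and telescoping
gives `x̃(T) ≤ z(T)`. For optimality, the partial sums of `x̃ - x` along the chain are
`z(C_j) - x(C_j) ≥ 0` and vanish at `C_n`, while `y` decreases along the chain because the chain
passes through every prefix union of the composition; summation by parts gives `y(x̃ - x) ≥ 0`.
-/

open Set

noncomputable section

/-- An (ordered set) composition of the finite index type `I`: a list of pairwise disjoint
nonempty subsets whose union is all of `I`. -/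
def IsSetComposition {I : Type*} [Fintype I] [DecidableEq I] (L : List (Finset I)) : Prop :=
  (∀ T ∈ L, T.Nonempty) ∧ L.Pairwise (fun S T => Disjoint S T) ∧
    L.foldr (· ∪ ·) ∅ = Finset.univ

/-- The braid cone `B_{T_1,…,T_k}` of a composition `(T_1,…,T_k)`. -/
def braidConeOfComp {I : Type*} [Fintype I] [DecidableEq I] (L : List (Finset I)) :
    Set (I → ℝ) :=
  {y | ∀ (a b : ℕ) (ha : a < L.length) (hb : b < L.length), a ≤ b →
    ∀ i ∈ L.get ⟨a, ha⟩, ∀ j ∈ L.get ⟨b, hb⟩, y j ≤ y i}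

/-- The union `T_1 ∪ … ∪ T_a` of the first `a` blocks of a composition. -/
def prefixUnion {I : Type*} [Fintype I] [DecidableEq I] (L : List (Finset I)) (a : ℕ) :
    Finset I :=
  (L.take a).foldr (· ∪ ·) ∅

open Finset

theorem Finset.sum_mul_nonneg_of_partialSums_nonneg {R : Type*} [CommRing R] [LinearOrder R]
    [IsOrderedRing R] {w b : ℕ → R} {n : ℕ} (hw : ∀ k, k + 1 < n → w (k + 1) ≤ w k)
    (hb : ∀ k ≤ n, 0 ≤ ∑ i ∈ range k, b i) (hbn : ∑ i ∈ range n, b i = 0) :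
    0 ≤ ∑ k ∈ range n, w k * b k := by
  have hparts := sum_range_by_parts w b n
  simp only [smul_eq_mul] at hparts
  rw [hparts, hbn, mul_zero, zero_sub, neg_nonneg]
  refine sum_nonpos fun k hk => ?_
  have hk : k + 1 < n := by rw [Finset.mem_range] at hk; omega
  exact mul_nonpos_of_nonpos_of_nonneg (sub_nonpos.mpr (hw k hk)) (hb (k + 1) hk.le)

theorem Finset.sum_mul_eq_mul_sum_of_card_eq_one {α R : Type*} [CommSemiring R]
    {s : Finset α} (hs : #s = 1) (f g : α → R) :
    ∑ i ∈ s, f i * g i = (∑ i ∈ s, f i) * ∑ i ∈ s, g i := by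
  obtain ⟨i, rfl⟩ := card_eq_one.mp hs
  simp

theorem Submodular.sub_le_sub_inter {I : Type*} [DecidableEq I] {z : Finset I → ℝ}
    (hz : Submodular z) {A B T : Finset I} (hAB : A ⊆ B) (hBT : B ⊆ A ∪ T) :
    z B - z A ≤ z (T ∩ B) - z (T ∩ A) := by
  have hunion : A ∪ T ∩ B = B := by
    rw [Finset.union_inter_distrib_left, Finset.union_eq_right.mpr hAB,
      Finset.inter_eq_right.mpr hBT]
  have hinter : A ∩ (T ∩ B) = T ∩ A := by
    rw [← Finset.inter_assoc, inter_comm A T, Finset.inter_assoc, Finset.inter_eq_left.mpr hAB]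
  have h := hz A (T ∩ B)
  rw [hunion, hinter] at h
  linarith

section List

variable {I : Type*} [DecidableEq I]

theorem List.mem_foldr_union {l : List (Finset I)} {i : I} :
    i ∈ l.foldr (· ∪ ·) ∅ ↔ ∃ T ∈ l, i ∈ T := by
  induction l with
  | nil => simp
  | cons T l ih => simp [ih]

variable [Fintype I] {L : List (Finset I)}

theorem mem_prefixUnion {a : ℕ} {i : I} :
    i ∈ prefixUnion L a ↔ ∃ (b : ℕ) (hb : b < L.length), b < a ∧ i ∈ L[b] := by
  simp only [prefixUnion, List.mem_foldr_union, List.mem_take_iff_getElem]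
  constructor
  · rintro ⟨_, ⟨b, hb, rfl⟩, hi⟩
    exact ⟨b, by omega, by omega, hi⟩
  · rintro ⟨b, hb, hba, hi⟩
    exact ⟨_, ⟨b, by omega, rfl⟩, hi⟩

theorem notMem_prefixUnion_of_mem_getElem (hdisj : L.Pairwise Disjoint) {a : ℕ}
    (ha : a < L.length) {i : I} (hi : i ∈ L[a]) : i ∉ prefixUnion L a := by
  rintro h
  obtain ⟨b, hb, hba, hib⟩ := mem_prefixUnion.mp h
  exact (List.pairwise_iff_getElem.mp hdisj b a hb ha hba).forall_ne_finset hib hi rfl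

theorem le_of_mem_braidConeOfComp (hunion : L.foldr (· ∪ ·) ∅ = Finset.univ) {y : I → ℝ}
    (hy : y ∈ braidConeOfComp L) {a : ℕ} (ha : a < L.length) {i i' : I} (hi : i ∈ L[a])
    (hi' : i' ∉ prefixUnion L a) : y i' ≤ y i := by
  obtain ⟨_, hT, hi'T⟩ := List.mem_foldr_union.mp (hunion ▸ Finset.mem_univ i')
  obtain ⟨b, hb, rfl⟩ := List.mem_iff_getElem.mp hT
  have hab : a ≤ b := by
    by_contra! hba
    exact hi' (mem_prefixUnion.mpr ⟨b, hb, hba, hi'T⟩)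
  exact hy a b ha hb hab i hi i' hi'T

end List

section Chain

variable {I : Type*} {C : ℕ → Finset I} {n : ℕ}

theorem chain_subset_of_le (hmono : ∀ j < n, C j ⊆ C (j + 1)) {m j : ℕ} (hmj : m ≤ j)
    (hjn : j ≤ n) : C m ⊆ C j := by
  induction j, hmj using Nat.le_induction with
  | base => exact subset_rfl
  | succ j _ ih => exact (ih (by omega)).trans (hmono j (by omega))

variable [DecidableEq I]

theorem sum_eq_sum_range_sum_sdiff {M : Type*} [AddCommMonoid M] (hC0 : C 0 = ∅)
    (hmono : ∀ j < n, C j ⊆ C (j + 1)) (f : I → M) {j : ℕ} (hj : j ≤ n) :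
    ∑ i ∈ C j, f i = ∑ k ∈ range j, ∑ i ∈ C (k + 1) \ C k, f i := by
  induction j with
  | zero => simp [hC0]
  | succ j ih =>
    rw [sum_range_succ, ← ih (by omega), ← sum_sdiff (hmono j (by omega)), add_comm]

variable {z : Finset I → ℝ} {xt : I → ℝ}

theorem greedy_sum_eq (hz0 : z ∅ = 0) (hC0 : C 0 = ∅) (hmono : ∀ j < n, C j ⊆ C (j + 1))
    (hxt : ∀ j < n, ∑ i ∈ C (j + 1) \ C j, xt i = z (C (j + 1)) - z (C j)) {j : ℕ}
    (hj : j ≤ n) : ∑ i ∈ C j, xt i = z (C j) := by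
  rw [sum_eq_sum_range_sum_sdiff hC0 hmono xt hj,
    sum_congr rfl fun k hk => hxt k (by rw [Finset.mem_range] at hk; omega),
    sum_range_sub (fun k => z (C k)), hC0, hz0, sub_zero]

theorem sum_inter_sdiff_le (hz : Submodular z) {A B : Finset I} (hAB : A ⊆ B)
    (hcard : #(B \ A) = 1) (hxt : ∑ i ∈ B \ A, xt i = z B - z A) (T : Finset I) :
    ∑ i ∈ (T ∩ B) \ (T ∩ A), xt i ≤ z (T ∩ B) - z (T ∩ A) := by
  obtain ⟨i, hi⟩ := card_eq_one.mp hcard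
  have hTsdiff : (T ∩ B) \ (T ∩ A) = T ∩ (B \ A) := by
    ext
    simp only [Finset.mem_sdiff, Finset.mem_inter]
    tauto
  rw [hTsdiff, hi]
  by_cases hiT : i ∈ T
  · rw [Finset.inter_singleton_of_mem hiT, ← hi, hxt]
    refine hz.sub_le_sub_inter hAB fun b hb => ?_
    by_cases hbA : b ∈ A
    · exact Finset.mem_union_left T hbA
    · have : b = i := Finset.mem_singleton.mp (hi ▸ Finset.mem_sdiff.mpr ⟨hb, hbA⟩)
      exact Finset.mem_union_right A (this ▸ hiT)
  · have hTB : T ∩ B = T ∩ A := by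
      rw [← Finset.union_sdiff_of_subset hAB, hi, Finset.inter_union_distrib_left,
        Finset.inter_singleton_of_notMem hiT, Finset.union_empty]
    rw [Finset.inter_singleton_of_notMem hiT, hTB, sum_empty, sub_self]

theorem greedy_mem_basePolytope [Fintype I] (hz : Submodular z) (hz0 : z ∅ = 0) (hC0 : C 0 = ∅)
    (hCn : C n = Finset.univ) (hchain : ∀ j < n, C j ⊆ C (j + 1) ∧ #(C (j + 1) \ C j) = 1)
    (hxt : ∀ j < n, ∑ i ∈ C (j + 1) \ C j, xt i = z (C (j + 1)) - z (C j)) :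
    xt ∈ basePolytope z := by
  have hmono : ∀ j < n, C j ⊆ C (j + 1) := fun j hj => (hchain j hj).1
  refine ⟨hCn ▸ greedy_sum_eq hz0 hC0 hmono hxt le_rfl, fun T => ?_⟩
  have hmonoT : ∀ j < n, T ∩ C j ⊆ T ∩ C (j + 1) := fun j hj =>
    Finset.inter_subset_inter_left (hmono j hj)
  calc ∑ i ∈ T, xt i
      = ∑ k ∈ range n, ∑ i ∈ (T ∩ C (k + 1)) \ (T ∩ C k), xt i := by
        rw [← sum_eq_sum_range_sum_sdiff (by rw [hC0, Finset.inter_empty]) hmonoT xt le_rfl, hCn,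
          Finset.inter_univ]
    _ ≤ ∑ k ∈ range n, (z (T ∩ C (k + 1)) - z (T ∩ C k)) := by
        refine sum_le_sum fun k hk => ?_
        rw [Finset.mem_range] at hk
        exact sum_inter_sdiff_le hz (hchain k hk).1 (hchain k hk).2 (hxt k hk) T
    _ = z T := by
        rw [sum_range_sub (fun k => z (T ∩ C k)), hCn, hC0, Finset.inter_univ, Finset.inter_empty,
          hz0, sub_zero]

theorem le_of_mem_braidConeOfComp_of_mem_chain [Fintype I] {L : List (Finset I)}
    (hdisj : L.Pairwise Disjoint) (hunion : L.foldr (· ∪ ·) ∅ = Finset.univ)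
    (hmono : ∀ j < n, C j ⊆ C (j + 1))
    (hcontain : ∀ a ≤ L.length, ∃ j ≤ n, prefixUnion L a = C j)
    {y : I → ℝ} (hy : y ∈ braidConeOfComp L) {j : ℕ} (hj : j < n) {i i' : I}
    (hi : i ∈ C (j + 1) \ C j) (hi' : i' ∉ C j) : y i' ≤ y i := by
  obtain ⟨_, hT, hiT⟩ := List.mem_foldr_union.mp (hunion ▸ Finset.mem_univ i)
  obtain ⟨a, ha, rfl⟩ := List.mem_iff_getElem.mp hT
  -- the blocks before that of `i` form some `C m`; it misses `i`, so `m ≤ j`, so it misses `i'`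
  obtain ⟨m, hmn, hPm⟩ := hcontain a ha.le
  have hmj : m ≤ j := by
    by_contra! hjm
    exact notMem_prefixUnion_of_mem_getElem hdisj ha hiT
      (hPm ▸ chain_subset_of_le hmono hjm hmn (Finset.mem_sdiff.mp hi).1)
  exact le_of_mem_braidConeOfComp hunion hy ha hiT fun h =>
    hi' (chain_subset_of_le hmono hmj hj.le (hPm ▸ h))

theorem evalDir_le_evalDir_greedy [Fintype I] {L : List (Finset I)}
    (hdisj : L.Pairwise Disjoint) (hunion : L.foldr (· ∪ ·) ∅ = Finset.univ) (hz0 : z ∅ = 0)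
    (hC0 : C 0 = ∅) (hCn : C n = Finset.univ)
    (hchain : ∀ j < n, C j ⊆ C (j + 1) ∧ #(C (j + 1) \ C j) = 1)
    (hcontain : ∀ a ≤ L.length, ∃ j ≤ n, prefixUnion L a = C j)
    (hxt : ∀ j < n, ∑ i ∈ C (j + 1) \ C j, xt i = z (C (j + 1)) - z (C j))
    {y : I → ℝ} (hy : y ∈ braidConeOfComp L) {x : I → ℝ} (hx : x ∈ basePolytope z) :
    evalDir y x ≤ evalDir y xt := by
  have hmono : ∀ j < n, C j ⊆ C (j + 1) := fun j hj => (hchain j hj).1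
  set w : ℕ → ℝ := fun k => ∑ i ∈ C (k + 1) \ C k, y i
  set b : ℕ → ℝ := fun k => ∑ i ∈ C (k + 1) \ C k, (xt i - x i)
  have hpartial : ∀ j ≤ n, ∑ k ∈ range j, b k = z (C j) - ∑ i ∈ C j, x i := by
    intro j hj
    rw [← sum_eq_sum_range_sum_sdiff hC0 hmono _ hj, sum_sub_distrib,
      greedy_sum_eq hz0 hC0 hmono hxt hj]
  have hw : ∀ k, k + 1 < n → w (k + 1) ≤ w k := fun k hk => by
    obtain ⟨i, hi⟩ := card_eq_one.mp (hchain k (by omega)).2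
    obtain ⟨i', hi'⟩ := card_eq_one.mp (hchain (k + 1) hk).2
    have hi'k : i' ∉ C k := fun h =>
      (Finset.mem_sdiff.mp (hi' ▸ Finset.mem_singleton_self i')).2 (hmono k (by omega) h)
    simp only [w, hi, hi', sum_singleton]
    exact le_of_mem_braidConeOfComp_of_mem_chain hdisj hunion hmono hcontain hy (by omega)
      (hi ▸ Finset.mem_singleton_self i) hi'k
  have habel : 0 ≤ ∑ k ∈ range n, w k * b k := by
    refine sum_mul_nonneg_of_partialSums_nonneg hw (fun j hj => ?_) ?_
    · rw [hpartial j hj, sub_nonneg]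
      exact hx.2 (C j)
    · rw [hpartial n le_rfl, hCn, hx.1, sub_self]
  calc evalDir y x
      ≤ evalDir y x + ∑ k ∈ range n, w k * b k := le_add_of_nonneg_right habel
    _ = evalDir y x + ∑ i ∈ C n, y i * (xt i - x i) := by
        rw [sum_eq_sum_range_sum_sdiff hC0 hmono _ le_rfl]
        refine congrArg _ (sum_congr rfl fun k hk => ?_)
        rw [Finset.mem_range] at hk
        exact (sum_mul_eq_mul_sum_of_card_eq_one (hchain k hk).2 _ _).symm
    _ = evalDir y xt := by
        simp only [evalDir, hCn, mul_sub, sum_sub_distrib]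
        ring

end Chain

theorem stmt16_general {I : Type*} [Fintype I] [DecidableEq I]
    (z : Finset I → ℝ) (hsub : Submodular z) (hz0 : z ∅ = 0)
    (L : List (Finset I)) (hL : IsSetComposition L)
    (n : ℕ)
    (C : ℕ → Finset I) (hC0 : C 0 = ∅) (hCn : C n = Finset.univ)
    (hchain : ∀ j < n, C j ⊆ C (j + 1) ∧ (C (j + 1) \ C j).card = 1)
    (hcontain : ∀ a ≤ L.length, ∃ j ≤ n, prefixUnion L a = C j)
    (xt : I → ℝ)
    (hxt : ∀ j < n, ∀ i ∈ C (j + 1) \ C j, xt i = z (C (j + 1)) - z (C j)) :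
    ((∀ j ≤ n, ∑ i ∈ C j, xt i = z (C j)) ∧ xt ∈ basePolytope z) ∧
    (∀ y ∈ braidConeOfComp L, ∀ x ∈ basePolytope z, evalDir y x ≤ evalDir y xt) := by
  obtain ⟨-, hdisj, hunion⟩ := hL
  have hmono : ∀ j < n, C j ⊆ C (j + 1) := fun j hj => (hchain j hj).1
  have hincr : ∀ j < n, ∑ i ∈ C (j + 1) \ C j, xt i = z (C (j + 1)) - z (C j) := by
    intro j hj
    rw [sum_congr rfl (hxt j hj), sum_const, (hchain j hj).2, one_smul]
  exact ⟨⟨fun j hj => greedy_sum_eq hz0 hC0 hmono hincr hj,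
      greedy_mem_basePolytope hsub hz0 hC0 hCn hchain hincr⟩,
    fun y hy x hx =>
      evalDir_le_evalDir_greedy hdisj hunion hz0 hC0 hCn hchain hcontain hincr hy hx⟩

/-- Let `z` be a submodular function with `z(∅) = 0`, `(T_1,…,T_k)` a
composition of `I`, and `∅ = C_0 ⊂ C_1 ⊂ … ⊂ C_n = I` a maximal chain in the Boolean
lattice containing the prefix unions `T_1, T_1 ∪ T_2, …, T_1 ∪ … ∪ T_k`. Let `x̃` be the
greedy point, `x̃_{i_j} = z(C_j) - z(C_{j-1})` where `i_j` is the unique element of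
`C_j \ C_{j-1}`.  Then (i) `x̃(C_j) = z(C_j)` for all `j` and `x̃ ∈ P(z)`, and (ii) for
every direction `y` in the braid cone `B_{T_1,…,T_k}`, the point `x̃` maximizes `y` over
the base polytope `P(z)`. -/
theorem stmt16 {I : Type*} [Fintype I] [DecidableEq I]
    (z : Finset I → ℝ) (hsub : Submodular z) (hz0 : z ∅ = 0)
    (L : List (Finset I)) (hL : IsSetComposition L)
    (n : ℕ) (hn : n = Fintype.card I)
    (C : ℕ → Finset I) (hC0 : C 0 = ∅) (hCn : C n = Finset.univ)
    (hchain : ∀ j < n, C j ⊆ C (j + 1) ∧ (C (j + 1) \ C j).card = 1)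
    (hcontain : ∀ a ≤ L.length, ∃ j ≤ n, prefixUnion L a = C j)
    (xt : I → ℝ)
    (hxt : ∀ j < n, ∀ i ∈ C (j + 1) \ C j, xt i = z (C (j + 1)) - z (C j)) :
    ((∀ j ≤ n, ∑ i ∈ C j, xt i = z (C j)) ∧ xt ∈ basePolytope z) ∧
    (∀ y ∈ braidConeOfComp L, ∀ x ∈ basePolytope z, evalDir y x ≤ evalDir y xt) :=
  stmt16_general z hsub hz0 L hL n C hC0 hCn hchain hcontain xt hxt
end
end

section
/- Let P ⊆ R^I be a generalized permutahedron, and define z_P : 2^I → R by z_P(A) = max_{x ∈ P} Σ_{i∈A} x_i for ∅ ≠ A ⊆ I (this maximum being attained since P is compact) and z_P(∅) = 0. Then z_P is submodular, and P equals the base polytope P(z_P) = { x ∈ R^I : Σ_{i∈I} x_i = z_P(I) and Σ_{i∈A} x_i ≤ z_P(A) for all A ⊆ I }. -/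
open Set Pointwise
open scoped Classical

noncomputable section

section AuxStmt17

variable {I : Type*} [Fintype I]

/-- `evalDir y` as a continuous linear map. -/
def clmOf (y : I → ℝ) : (I → ℝ) →L[ℝ] ℝ :=
  ∑ i, y i • ContinuousLinearMap.proj i

lemma clmOf_apply (y x : I → ℝ) : clmOf y x = evalDir y x := by
  simp [clmOf, evalDir, ContinuousLinearMap.sum_apply]

lemma poly_nonempty {P : Set (I → ℝ)} (hP : IsPolytope P) : P.Nonempty := by
  obtain ⟨V, hV, rfl⟩ := hP
  exact (Finset.coe_nonempty.mpr hV).mono (subset_convexHull ℝ _)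

lemma poly_compact {P : Set (I → ℝ)} (hP : IsPolytope P) : IsCompact P := by
  obtain ⟨V, hV, rfl⟩ := hP
  exact V.finite_toSet.isCompact_convexHull ℝ

lemma poly_convex {P : Set (I → ℝ)} (hP : IsPolytope P) : Convex ℝ P := by
  obtain ⟨V, hV, rfl⟩ := hP
  exact convex_convexHull ℝ _

lemma maxFace_nonempty {P : Set (I → ℝ)} (hP : IsPolytope P) (y : I → ℝ) :
    (maxFace P y).Nonempty := by
  obtain ⟨p, hp, hmax⟩ := (poly_compact hP).exists_isMaxOn (poly_nonempty hP)
    ((clmOf y).continuous.continuousOn)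
  exact ⟨p, hp, fun x' hx' => by simpa [clmOf_apply] using hmax hx'⟩

lemma maxFace_exposed (P : Set (I → ℝ)) (y : I → ℝ) : IsExposed ℝ P (maxFace P y) :=
  fun _ => ⟨clmOf y, by ext x; simp [maxFace, clmOf_apply]⟩

lemma exists_braid {P : Set (I → ℝ)} (hP : IsGenPerm P) (y : I → ℝ) :
    ∃ w : I → ℕ, y ∈ braidCone w ∧ braidCone w ⊆ normalCone P (maxFace P y) := by
  obtain ⟨W, hW, hN⟩ := hP.2 _ (maxFace_exposed P y) (maxFace_nonempty hP.1 y)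
  have hy : y ∈ normalCone P (maxFace P y) := Set.Subset.rfl
  rw [hN] at hy
  obtain ⟨C, hCW, hyC⟩ := hy
  obtain ⟨w, rfl⟩ := hW hCW
  exact ⟨w, hyC, fun y' hy' => hN ▸ ⟨_, hCW, hy'⟩⟩

lemma sum_const_on {P : Set (I → ℝ)} (hP : IsGenPerm P) {p q : I → ℝ}
    (hp : p ∈ P) (hq : q ∈ P) : ∑ i, p i = ∑ i, q i := by
  obtain ⟨w, h1, hsub⟩ := exists_braid hP (fun _ => (1:ℝ))
  obtain ⟨r, hr⟩ := maxFace_nonempty hP.1 (fun _ => (1:ℝ))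
  have hneg : (fun _ => (-1:ℝ)) ∈ braidCone w := fun i j _ => le_refl _
  have hrneg : r ∈ maxFace P (fun _ => (-1:ℝ)) := hsub hneg hr
  have e1 : ∀ x : I → ℝ, evalDir (fun _ => (1:ℝ)) x = ∑ i, x i := by
    intro x; simp [evalDir]
  have e2 : ∀ x : I → ℝ, evalDir (fun _ => (-1:ℝ)) x = -∑ i, x i := by
    intro x; simp [evalDir, Finset.sum_neg_distrib]
  have h1p := hr.2 p hp
  have h1q := hr.2 q hq
  have h2p := hrneg.2 p hp
  have h2q := hrneg.2 q hq
  rw [e1, e1] at h1p h1q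
  rw [e2, e2] at h2p h2q
  linarith

variable [DecidableEq I]

/-- The indicator direction of a finite set. -/
def ind (T : Finset I) : I → ℝ := fun i => if i ∈ T then 1 else 0

lemma evalDir_ind (T : Finset I) (x : I → ℝ) : evalDir (ind T) x = ∑ i ∈ T, x i := by
  simp [evalDir, ind, ite_mul, Finset.sum_ite_mem]

lemma ind_mem_braidCone {w : I → ℕ} {y : I → ℝ} (hy : y ∈ braidCone w) (T : Finset I)
    (hT : ∀ i j, y i ≤ y j → i ∈ T → j ∈ T) : ind T ∈ braidCone w := by
  intro i j hij
  have hyij := hy i j hij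
  by_cases hi : i ∈ T
  · simp [ind, hi, hT i j hyij hi]
  · simp only [ind, hi, if_false]
    split_ifs <;> norm_num

lemma ind_plus_cases (A B : Finset I) (j : I) :
    (j ∈ A ∪ B ↔ (1:ℝ) ≤ ind A j + ind B j) ∧ (j ∈ A ∩ B ↔ (2:ℝ) ≤ ind A j + ind B j) := by
  unfold ind
  by_cases hA : j ∈ A <;> by_cases hB : j ∈ B <;>
    simp [hA, hB, Finset.mem_union, Finset.mem_inter] <;> norm_num

lemma key_ineq : ∀ (n : ℕ) (y d : I → ℝ), (Finset.univ.image y).card ≤ n →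
    (∑ i, d i = 0) → (∀ t : ℝ, ∑ i ∈ Finset.univ.filter (fun i => t ≤ y i), d i ≤ 0) →
    ∑ i, y i * d i ≤ 0 := by
  intro n
  induction n with
  | zero =>
    intro y d hcard hsum hlev
    have himg : Finset.univ.image y = ∅ :=
      Finset.card_eq_zero.mp (le_antisymm hcard (Nat.zero_le _))
    have huniv : (Finset.univ : Finset I) = ∅ := by
      by_contra h
      obtain ⟨i, hi⟩ := Finset.nonempty_of_ne_empty h
      exact absurd (Finset.mem_image_of_mem y hi) (by simp [himg])
    rw [huniv, Finset.sum_empty]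
  | succ n ih =>
    intro y d hcard hsum hlev
    by_cases hconst : ∀ i j, y i = y j
    · rcases isEmpty_or_nonempty I with h | h
      · simp
      · obtain ⟨i0⟩ := h
        have : ∑ i, y i * d i = y i0 * ∑ i, d i := by
          rw [Finset.mul_sum]
          exact Finset.sum_congr rfl (fun i _ => by rw [hconst i i0])
        rw [this, hsum, mul_zero]
    · push_neg at hconst
      obtain ⟨a, b, hab⟩ := hconst
      set S := Finset.univ.image y with hS
      have hSne : S.Nonempty := ⟨y a, Finset.mem_image_of_mem y (Finset.mem_univ a)⟩
      set m := S.min' hSne with hm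
      have h2 : 1 < S.card := Finset.one_lt_card.mpr
        ⟨y a, Finset.mem_image_of_mem y (Finset.mem_univ a),
         y b, Finset.mem_image_of_mem y (Finset.mem_univ b), hab⟩
      have hS'ne : (S.erase m).Nonempty := by
        rw [← Finset.card_pos, Finset.card_erase_of_mem (S.min'_mem hSne)]; omega
      set m' := (S.erase m).min' hS'ne with hm'
      have hm'S : m' ∈ S.erase m := (S.erase m).min'_mem hS'ne
      have hmm' : m < m' := lt_of_le_of_ne
        (S.min'_le _ (Finset.mem_of_mem_erase hm'S)) (Ne.symm (Finset.ne_of_mem_erase hm'S))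
      have hage : ∀ i, y i ≠ m → m' ≤ y i := fun i hi =>
        (S.erase m).min'_le _ (Finset.mem_erase.mpr
          ⟨hi, Finset.mem_image_of_mem y (Finset.mem_univ i)⟩)
      set y' := fun i => if y i = m then m' else y i with hy'
      have hy'ge : ∀ i, m' ≤ y' i := by
        intro i
        by_cases h : y i = m
        · simp [hy', h]
        · simpa [hy', h] using hage i h
      have hsub : Finset.univ.image y' ⊆ S.erase m := by
        intro v hv
        obtain ⟨i, _, rfl⟩ := Finset.mem_image.mp hv
        by_cases h : y i = m
        · simpa [hy', h] using hm'S
        · simp only [hy', h, if_false]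
          exact Finset.mem_erase.mpr ⟨h, Finset.mem_image_of_mem y (Finset.mem_univ i)⟩
      have hcard' : (Finset.univ.image y').card ≤ n := by
        have h3 := Finset.card_le_card hsub
        rw [Finset.card_erase_of_mem (S.min'_mem hSne)] at h3
        omega
      have hlev' : ∀ t : ℝ, ∑ i ∈ Finset.univ.filter (fun i => t ≤ y' i), d i ≤ 0 := by
        intro t
        by_cases ht : t ≤ m'
        · rw [Finset.filter_true_of_mem (fun i _ => le_trans ht (hy'ge i))]
          exact hsum.le
        · push_neg at ht
          have heq : Finset.univ.filter (fun i => t ≤ y' i)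
              = Finset.univ.filter (fun i => t ≤ y i) := by
            apply Finset.filter_congr
            intro i _
            by_cases h : y i = m
            · simp only [hy', h, if_true]
              constructor <;> intro hh <;> linarith
            · simp [hy', h]
          rw [heq]; exact hlev t
      have hmain := ih y' d hcard' hsum hlev'
      have hfil : 0 ≤ ∑ i ∈ Finset.univ.filter (fun i => y i = m), d i := by
        have hsplit := Finset.sum_filter_add_sum_filter_not Finset.univ (fun i => y i = m) d
        have hne : Finset.univ.filter (fun i => ¬ y i = m)
            = Finset.univ.filter (fun i => m' ≤ y i) := by
          apply Finset.filter_congr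
          intro i _
          constructor
          · intro h; exact hage i h
          · intro h hh; rw [hh] at h; linarith
        rw [hne] at hsplit
        have := hlev m'
        linarith
      have hdiff : ∑ i, y' i * d i - ∑ i, y i * d i
          = (m' - m) * ∑ i ∈ Finset.univ.filter (fun i => y i = m), d i := by
        rw [← Finset.sum_sub_distrib, Finset.mul_sum, Finset.sum_filter]
        apply Finset.sum_congr rfl
        intro i _
        by_cases h : y i = m
        · simp [hy', h]; ring
        · simp [hy', h]
      have hprod : 0 ≤ (m' - m) * ∑ i ∈ Finset.univ.filter (fun i => y i = m), d i :=
        mul_nonneg (by linarith) hfil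
      linarith

lemma sum_eq_zuniv {P : Set (I → ℝ)} (hP : IsGenPerm P) {zP : Finset I → ℝ}
    (hz0 : zP ∅ = 0)
    (hzmax : ∀ A : Finset I, A.Nonempty →
      IsGreatest ((fun x : I → ℝ => ∑ i ∈ A, x i) '' P) (zP A))
    {p : I → ℝ} (hp : p ∈ P) : ∑ i, p i = zP Finset.univ := by
  rcases (Finset.univ : Finset I).eq_empty_or_nonempty with h | h
  · rw [h, Finset.sum_empty, hz0]
  · obtain ⟨⟨q, hq, hq2⟩, -⟩ := hzmax _ h
    have hq2' : ∑ i, q i = zP Finset.univ := hq2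
    rw [← hq2']
    exact sum_const_on hP hp hq

lemma sum_le_z {P : Set (I → ℝ)} {zP : Finset I → ℝ} (hz0 : zP ∅ = 0)
    (hzmax : ∀ A : Finset I, A.Nonempty →
      IsGreatest ((fun x : I → ℝ => ∑ i ∈ A, x i) '' P) (zP A))
    {p : I → ℝ} (hp : p ∈ P) (T : Finset I) : ∑ i ∈ T, p i ≤ zP T := by
  rcases T.eq_empty_or_nonempty with rfl | hT
  · simp [hz0]
  · exact (hzmax T hT).2 ⟨p, hp, rfl⟩

lemma maxFace_sum_eq {P : Set (I → ℝ)} {zP : Finset I → ℝ}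
    (hzmax : ∀ A : Finset I, A.Nonempty →
      IsGreatest ((fun x : I → ℝ => ∑ i ∈ A, x i) '' P) (zP A))
    {T : Finset I} (hT : T.Nonempty) {p : I → ℝ}
    (hp : p ∈ maxFace P (ind T)) : ∑ i ∈ T, p i = zP T := by
  obtain ⟨⟨q, hq, hq2⟩, hub⟩ := hzmax T hT
  have h1 : ∑ i ∈ T, p i ≤ zP T := hub ⟨p, hp.1, rfl⟩
  have h2 := hp.2 q hq
  rw [evalDir_ind, evalDir_ind] at h2
  have hq2' : ∑ i ∈ T, q i = zP T := hq2
  linarith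

end AuxStmt17


/-- Let `P ⊆ ℝ^I` be a generalized permutahedron and let
`z_P(A) = max_{x ∈ P} Σ_{i ∈ A} x_i` for nonempty `A` (the maximum being attained since `P`
is compact), with `z_P(∅) = 0`. Then `z_P` is submodular and `P` equals the base polytope
`P(z_P)`. -/
theorem stmt17 {I : Type*} [Fintype I] [DecidableEq I] (P : Set (I → ℝ))
    (hP : IsGenPerm P) (zP : Finset I → ℝ) (hz0 : zP ∅ = 0)
    (hzmax : ∀ A : Finset I, A.Nonempty →
      IsGreatest ((fun x : I → ℝ => ∑ i ∈ A, x i) '' P) (zP A)) :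
    Submodular zP ∧ P = basePolytope zP := by
  constructor
  · -- Submodularity
    intro A B
    set y : I → ℝ := fun i => ind A i + ind B i with hy
    obtain ⟨w, hyw, hwsub⟩ := exists_braid hP y
    obtain ⟨p, hp⟩ := maxFace_nonempty hP.1 y
    have hUnion : ∀ i j, y i ≤ y j → i ∈ A ∪ B → j ∈ A ∪ B := by
      intro i j hij hi
      have hij' : ind A i + ind B i ≤ ind A j + ind B j := hij
      have h1 : (1:ℝ) ≤ ind A i + ind B i := (ind_plus_cases A B i).1.mp hi
      exact (ind_plus_cases A B j).1.mpr (by linarith)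
    have hInter : ∀ i j, y i ≤ y j → i ∈ A ∩ B → j ∈ A ∩ B := by
      intro i j hij hi
      have hij' : ind A i + ind B i ≤ ind A j + ind B j := hij
      have h1 : (2:ℝ) ≤ ind A i + ind B i := (ind_plus_cases A B i).2.mp hi
      exact (ind_plus_cases A B j).2.mpr (by linarith)
    have hpU : p ∈ maxFace P (ind (A ∪ B)) := hwsub (ind_mem_braidCone hyw _ hUnion) hp
    have hpI : p ∈ maxFace P (ind (A ∩ B)) := hwsub (ind_mem_braidCone hyw _ hInter) hp
    have hA' : ∑ i ∈ A, p i ≤ zP A := sum_le_z hz0 hzmax hp.1 A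
    have hB' : ∑ i ∈ B, p i ≤ zP B := sum_le_z hz0 hzmax hp.1 B
    have hU : ∑ i ∈ A ∪ B, p i = zP (A ∪ B) := by
      rcases (A ∪ B).eq_empty_or_nonempty with h | h
      · rw [h, hz0, Finset.sum_empty]
      · exact maxFace_sum_eq hzmax h hpU
    have hI : ∑ i ∈ A ∩ B, p i = zP (A ∩ B) := by
      rcases (A ∩ B).eq_empty_or_nonempty with h | h
      · rw [h, hz0, Finset.sum_empty]
      · exact maxFace_sum_eq hzmax h hpI
    have h1 := Finset.sum_sdiff (f := p) (Finset.subset_union_left : A ⊆ A ∪ B)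
    have h2 := Finset.sum_sdiff (f := p) (Finset.inter_subset_right : A ∩ B ⊆ B)
    have e : (A ∪ B) \ A = B \ (A ∩ B) := by
      ext a
      simp only [Finset.mem_sdiff, Finset.mem_union, Finset.mem_inter]
      tauto
    rw [e] at h1
    linarith
  · -- P = basePolytope zP
    apply Set.Subset.antisymm
    · intro x hx
      exact ⟨sum_eq_zuniv hP hz0 hzmax hx, fun T => sum_le_z hz0 hzmax hx T⟩
    · intro x hx
      by_contra hxP
      obtain ⟨f, u, hfu, hux⟩ := geometric_hahn_banach_closed_point
        (poly_convex hP.1) (poly_compact hP.1).isClosed hxP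
      set y : I → ℝ := fun i => f (Pi.single i 1) with hy
      have hfy : ∀ v : I → ℝ, f v = evalDir y v := by
        intro v
        have hv : v = ∑ i, Pi.single i (v i) := (Finset.univ_sum_single v).symm
        conv_lhs => rw [hv]
        rw [map_sum]
        unfold evalDir
        apply Finset.sum_congr rfl
        intro i _
        have hsingle : (Pi.single i (v i) : I → ℝ) = v i • (Pi.single i 1 : I → ℝ) := by
          rw [← Pi.single_smul, smul_eq_mul, mul_one]
        rw [hsingle, map_smul, smul_eq_mul, mul_comm]
      obtain ⟨w, hyw, hwsub⟩ := exists_braid hP y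
      obtain ⟨p, hp⟩ := maxFace_nonempty hP.1 y
      have hlev : ∀ t : ℝ, ∑ i ∈ Finset.univ.filter (fun i => t ≤ y i), (x i - p i) ≤ 0 := by
        intro t
        set T := Finset.univ.filter (fun i => t ≤ y i) with hT
        have hupper : ∀ i j, y i ≤ y j → i ∈ T → j ∈ T := by
          intro i j hij hi
          rw [hT, Finset.mem_filter] at hi ⊢
          exact ⟨Finset.mem_univ j, le_trans hi.2 hij⟩
        have hpT : p ∈ maxFace P (ind T) := hwsub (ind_mem_braidCone hyw T hupper) hp
        rcases T.eq_empty_or_nonempty with h | h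
        · rw [h, Finset.sum_empty]
        · have h1 : ∑ i ∈ T, p i = zP T := maxFace_sum_eq hzmax h hpT
          have h2 : ∑ i ∈ T, x i ≤ zP T := hx.2 T
          rw [Finset.sum_sub_distrib]
          linarith
      have hsum : ∑ i, (x i - p i) = 0 := by
        rw [Finset.sum_sub_distrib, hx.1, sum_eq_zuniv hP hz0 hzmax hp.1]
        ring
      have hkey := key_ineq (Finset.univ.image y).card y (fun i => x i - p i) le_rfl hsum hlev
      have hcomp : evalDir y x ≤ evalDir y p := by
        have heq : ∑ i, y i * (x i - p i) = evalDir y x - evalDir y p := by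
          simp [evalDir, mul_sub, Finset.sum_sub_distrib]
        rw [heq] at hkey
        linarith
      have h1 := hfu p hp.1
      rw [hfy p] at h1
      rw [hfy x] at hux
      linarith
end
end

section
/- Let P ⊆ R^d be a generalized permutahedron and k ∈ {0,…,d-1}. For every positive integer m, the number of integer points y ∈ {1,…,m}^d whose y-maximal face P_y is a k-dimensional face of P equals Σ_{N} Ehr_{N° ∩ (0,1)^d}(m+1), the sum over all cones N of the normal fan of P with dim N = d-k of the Ehrhart counting functions of the relatively open sets N° ∩ (0,1)^d, where Ehr_S(t) = #(Z^d ∩ t·S). -/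
open Set Pointwise
open scoped Classical

noncomputable section

/-- `x` is a lattice point if all its coordinates are integers. -/
def IsLatticePoint {d : ℕ} (x : Fin d → ℝ) : Prop := ∀ i, ∃ n : ℤ, x i = (n : ℝ)

/-- The number of lattice points of a set. -/
def latticeCount {d : ℕ} (S : Set (Fin d → ℝ)) : ℕ := {x ∈ S | IsLatticePoint x}.ncard

/-- The `t`-th dilate of a set. -/
def dilate {d : ℕ} (t : ℕ) (S : Set (Fin d → ℝ)) : Set (Fin d → ℝ) := (t : ℝ) • S

/-- The normal fan of a polytope: the normal cones of its nonempty faces. -/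
def normalFan {I : Type*} [Fintype I] (P : Set (I → ℝ)) : Set (Set (I → ℝ)) :=
  {C | ∃ F : Set (I → ℝ), IsExposed ℝ P F ∧ F.Nonempty ∧ C = normalCone P F}

namespace St19

variable {d : ℕ}

def evalDirL (y : Fin d → ℝ) : (Fin d → ℝ) →ₗ[ℝ] ℝ where
  toFun x := evalDir y x
  map_add' a b := by simp [evalDir, mul_add, Finset.sum_add_distrib]
  map_smul' c a := by
    simp only [evalDir, RingHom.id_apply, Finset.mul_sum, Pi.smul_apply, smul_eq_mul]
    exact Finset.sum_congr rfl fun i _ => by ring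

lemma evalDir_add_left (y z x : Fin d → ℝ) :
    evalDir (y + z) x = evalDir y x + evalDir z x := by
  simp [evalDir, add_mul, Finset.sum_add_distrib]

lemma evalDir_sub_left (y z x : Fin d → ℝ) :
    evalDir (y - z) x = evalDir y x - evalDir z x := by
  simp [evalDir, sub_mul, Finset.sum_sub_distrib]

lemma evalDir_smul_left (c : ℝ) (y x : Fin d → ℝ) :
    evalDir (c • y) x = c * evalDir y x := by
  simp only [evalDir, Pi.smul_apply, smul_eq_mul, Finset.mul_sum]
  exact Finset.sum_congr rfl fun i _ => by ring

lemma abs_evalDir_le (y x : Fin d → ℝ) : |evalDir y x| ≤ d * (‖y‖ * ‖x‖) := by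
  calc |∑ i, y i * x i| ≤ ∑ i, |y i * x i| := Finset.abs_sum_le_sum_abs _ _
    _ ≤ ∑ _i : Fin d, ‖y‖ * ‖x‖ := by
        refine Finset.sum_le_sum fun i _ => ?_
        rw [abs_mul]
        have h1 : |y i| ≤ ‖y‖ := by
          simpa [Real.norm_eq_abs] using norm_le_pi_norm y i
        have h2 : |x i| ≤ ‖x‖ := by
          simpa [Real.norm_eq_abs] using norm_le_pi_norm x i
        exact mul_le_mul h1 h2 (abs_nonneg _) (norm_nonneg _)
    _ = d * (‖y‖ * ‖x‖) := by simp [Finset.sum_const, nsmul_eq_mul]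

lemma evalDir_le_sup {V : Finset (Fin d → ℝ)} (hV : V.Nonempty) (y : Fin d → ℝ)
    {x : Fin d → ℝ} (hx : x ∈ convexHull ℝ (V : Set (Fin d → ℝ))) :
    evalDir y x ≤ V.sup' hV (evalDir y) := by
  have hconv : Convex ℝ {z : Fin d → ℝ | evalDir y z ≤ V.sup' hV (evalDir y)} :=
    convex_halfSpace_le (⟨(evalDirL y).map_add, fun c a => (evalDirL y).map_smul c a⟩ :
      IsLinearMap ℝ (evalDir y)) _
  have : convexHull ℝ (V : Set (Fin d → ℝ)) ⊆
      {z : Fin d → ℝ | evalDir y z ≤ V.sup' hV (evalDir y)} :=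
    convexHull_min (fun v hv => Finset.le_sup' (evalDir y) hv) hconv
  exact this hx

lemma maxFace_nonempty {V : Finset (Fin d → ℝ)} (hV : V.Nonempty)
    {P : Set (Fin d → ℝ)} (hPV : P = convexHull ℝ (V : Set (Fin d → ℝ))) (y : Fin d → ℝ) :
    (maxFace P y).Nonempty := by
  obtain ⟨v, hvV, hvmax⟩ := V.exists_max_image (evalDir y) hV
  refine ⟨v, ?_, fun x' hx' => ?_⟩
  · rw [hPV]; exact subset_convexHull ℝ _ hvV
  · rw [hPV] at hx'
    refine (evalDir_le_sup hV y hx').trans ?_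
    exact Finset.sup'_le hV _ fun b hb => hvmax b hb

lemma maxFace_smul {P : Set (Fin d → ℝ)} {c : ℝ} (hc : 0 < c) (y : Fin d → ℝ) :
    maxFace P (c • y) = maxFace P y := by
  ext x
  simp only [maxFace, mem_setOf_eq, evalDir_smul_left]
  exact and_congr_right fun _ => forall₂_congr fun x' _ =>
    ⟨fun h => le_of_mul_le_mul_left h hc, fun h => by nlinarith⟩

lemma norm_le_of_mem_hull {V : Finset (Fin d → ℝ)} (hV : V.Nonempty)
    {x : Fin d → ℝ} (hx : x ∈ convexHull ℝ (V : Set (Fin d → ℝ))) :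
    ‖x‖ ≤ V.sup' hV (fun v => ‖v‖) := by
  have : convexHull ℝ (V : Set (Fin d → ℝ)) ⊆ Metric.closedBall 0 (V.sup' hV (fun v => ‖v‖)) := by
    apply convexHull_min _ (convex_closedBall _ _)
    intro v hv
    rw [Metric.mem_closedBall, dist_zero_right]; exact Finset.le_sup' (fun v => ‖v‖) hv
  simpa [Metric.mem_closedBall, dist_eq_norm] using this hx

lemma perturb {V : Finset (Fin d → ℝ)} (hV : V.Nonempty)
    {P : Set (Fin d → ℝ)} (hPV : P = convexHull ℝ (V : Set (Fin d → ℝ))) (y0 : Fin d → ℝ) :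
    ∃ ε > 0, ∀ z : Fin d → ℝ, ‖z - y0‖ < ε →
      (∀ x1 ∈ maxFace P y0, ∀ x2 ∈ maxFace P y0, evalDir z x1 = evalDir z x2) →
      maxFace P y0 ⊆ maxFace P z := by
  set F := maxFace P y0 with hF
  set M := V.sup' hV (evalDir y0) with hM
  set R : ℝ := V.sup' hV (fun v => ‖v‖) + 1 with hR
  have hR0 : 0 < R := by
    have : (0:ℝ) ≤ V.sup' hV (fun v => ‖v‖) := by
      obtain ⟨v, hv⟩ := hV
      exact le_trans (norm_nonneg v) (Finset.le_sup' _ hv)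
    linarith
  set V' := V.filter (fun v => evalDir y0 v < M) with hV'
  set δ : ℝ := if h : V'.Nonempty then V'.inf' h (fun v => M - evalDir y0 v) else 1 with hδ
  have hδ0 : 0 < δ := by
    rw [hδ]
    split_ifs with h
    · rw [Finset.lt_inf'_iff]
      intro v hv
      rw [hV', Finset.mem_filter] at hv
      linarith [hv.2]
    · norm_num
  refine ⟨δ / (2 * d * R + 1), by positivity, fun z hz hconst x0 hx0 => ?_⟩
  set ε : ℝ := δ / (2 * d * R + 1) with hε
  -- bound on evalDir (z - y0) at points of norm ≤ R
  have key : ∀ x : Fin d → ℝ, ‖x‖ ≤ R → |evalDir (z - y0) x| ≤ d * ε * R := by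
    intro x hx
    calc |evalDir (z - y0) x| ≤ d * (‖z - y0‖ * ‖x‖) := abs_evalDir_le _ _
      _ ≤ d * (ε * R) := by
          apply mul_le_mul_of_nonneg_left _ (by positivity)
          apply mul_le_mul hz.le hx (norm_nonneg _) (by positivity)
      _ = d * ε * R := by ring
  have hnormV : ∀ v ∈ V, ‖v‖ ≤ R := fun v hv => by
    have := Finset.le_sup' (fun v => ‖v‖) hv; linarith
  have hx0P : x0 ∈ P := hx0.1
  have hx0norm : ‖x0‖ ≤ R := by
    have := norm_le_of_mem_hull hV (hPV ▸ hx0P); linarith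
  have hx0max : ∀ v ∈ V, evalDir y0 v ≤ evalDir y0 x0 := fun v hv =>
    hx0.2 v (hPV ▸ subset_convexHull ℝ _ hv)
  have hMx0 : M ≤ evalDir y0 x0 := Finset.sup'_le hV _ hx0max
  -- main estimate
  refine ⟨hx0P, fun x' hx' => ?_⟩
  rw [hPV] at hx'
  refine (evalDir_le_sup hV z hx').trans ?_
  rw [Finset.sup'_le_iff]
  intro v hv
  by_cases hvM : evalDir y0 v < M
  · -- far vertex
    have h1 : |evalDir (z - y0) v| ≤ d * ε * R := key v (hnormV v hv)
    have h2 : |evalDir (z - y0) x0| ≤ d * ε * R := key x0 hx0norm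
    have hδv : δ ≤ M - evalDir y0 v := by
      rw [hδ]
      have hvV' : v ∈ V' := by rw [hV', Finset.mem_filter]; exact ⟨hv, hvM⟩
      rw [dif_pos ⟨v, hvV'⟩]
      exact Finset.inf'_le _ hvV'
    have hεsmall : 2 * (d * ε * R) < δ := by
      have h2dR : (0:ℝ) < 2 * d * R + 1 := by positivity
      rw [hε, show 2 * (↑d * (δ / (2 * ↑d * R + 1)) * R) = (2 * ↑d * R) * δ / (2 * ↑d * R + 1) by ring,
        div_lt_iff₀ h2dR]
      nlinarith [hδ0]
    have e1 : evalDir z v = evalDir y0 v + evalDir (z - y0) v := by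
      rw [evalDir_sub_left]; ring
    have e2 : evalDir z x0 = evalDir y0 x0 + evalDir (z - y0) x0 := by
      rw [evalDir_sub_left]; ring
    rw [e1, e2]
    have := abs_le.mp h1
    have := abs_le.mp h2
    linarith
  · -- vertex in the face
    push_neg at hvM
    have hvF : v ∈ F := by
      refine ⟨hPV ▸ subset_convexHull ℝ _ hv, fun x'' hx'' => ?_⟩
      rw [hPV] at hx''
      exact (evalDir_le_sup hV y0 hx'').trans hvM
    exact (hconst v hvF x0 hx0).le

def constSpace (F : Set (Fin d → ℝ)) : Submodule ℝ (Fin d → ℝ) where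
  carrier := {z | ∀ x1 ∈ F, ∀ x2 ∈ F, evalDir z x1 = evalDir z x2}
  add_mem' := fun ha hb x1 h1 x2 h2 => by
    rw [evalDir_add_left, evalDir_add_left, ha x1 h1 x2 h2, hb x1 h1 x2 h2]
  zero_mem' := fun x1 _ x2 _ => by simp [evalDir]
  smul_mem' := fun c z hz x1 h1 x2 h2 => by
    rw [evalDir_smul_left, evalDir_smul_left, hz x1 h1 x2 h2]

lemma normalCone_subset_constSpace (P F : Set (Fin d → ℝ)) :
    normalCone P F ⊆ (constSpace F : Set (Fin d → ℝ)) := fun y hy x1 h1 x2 h2 =>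
  le_antisymm ((hy h2).2 x1 (hy h1).1) ((hy h1).2 x2 (hy h2).1)

lemma affineSpan_normalCone_subset (P F : Set (Fin d → ℝ)) :
    (affineSpan ℝ (normalCone P F) : Set (Fin d → ℝ)) ⊆ (constSpace F : Set (Fin d → ℝ)) := by
  intro z hz
  have h : affineSpan ℝ (normalCone P F) ≤ (constSpace F).toAffineSubspace :=
    affineSpan_le.mpr (normalCone_subset_constSpace P F)
  exact (Submodule.mem_toAffineSubspace).mp (h hz)

lemma mem_intrinsicInterior_normalCone {V : Finset (Fin d → ℝ)} (hV : V.Nonempty)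
    {P : Set (Fin d → ℝ)} (hPV : P = convexHull ℝ (V : Set (Fin d → ℝ))) (y0 : Fin d → ℝ) :
    y0 ∈ intrinsicInterior ℝ (normalCone P (maxFace P y0)) := by
  set F := maxFace P y0 with hF
  set C := normalCone P F with hC
  have hy0C : y0 ∈ C := fun x hx => hx
  obtain ⟨ε, hε, hper⟩ := perturb hV hPV y0
  rw [mem_intrinsicInterior]
  refine ⟨⟨y0, subset_affineSpan ℝ C hy0C⟩, ?_, rfl⟩
  rw [mem_interior]
  refine ⟨Subtype.val ⁻¹' Metric.ball y0 ε, ?_, Metric.isOpen_ball.preimage continuous_subtype_val,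
    by simpa [Metric.mem_ball] using hε⟩
  rintro ⟨z, hzspan⟩ hzball
  have hznear : ‖z - y0‖ < ε := by
    simpa [Metric.mem_ball, dist_eq_norm] using hzball
  have hzconst : ∀ x1 ∈ F, ∀ x2 ∈ F, evalDir z x1 = evalDir z x2 :=
    affineSpan_normalCone_subset P F hzspan
  exact hper z hznear hzconst

lemma maxFace_eq_of_mem_intrinsicInterior' {V : Finset (Fin d → ℝ)} (hV : V.Nonempty)
    {P : Set (Fin d → ℝ)} (hPV : P = convexHull ℝ (V : Set (Fin d → ℝ)))
    {y y0 : Fin d → ℝ}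
    (hy : y ∈ intrinsicInterior ℝ (normalCone P (maxFace P y0))) :
    maxFace P y = maxFace P y0 := by
  set F := maxFace P y0 with hF
  set C := normalCone P F with hC
  obtain ⟨p, hpint, hpy⟩ := mem_intrinsicInterior.mp hy
  have hyC : y ∈ C := by
    have := interior_subset hpint
    rwa [mem_preimage, hpy] at this
  have hy0C : y0 ∈ C := fun x hx => hx
  -- prolongation: find t > 0 with y + t(y - y0) ∈ C
  have hmem : ∀ t : ℝ, t • (y - y0) + y ∈ affineSpan ℝ C := by
    intro t
    have := AffineSubspace.smul_vsub_vadd_mem (affineSpan ℝ C) t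
      (subset_affineSpan ℝ C hyC) (subset_affineSpan ℝ C hy0C) (subset_affineSpan ℝ C hyC)
    simpa [vsub_eq_sub, vadd_eq_add] using this
  set γ : ℝ → (affineSpan ℝ C : Set (Fin d → ℝ)) := fun t => ⟨t • (y - y0) + y, hmem t⟩ with hγ
  have hcont : Continuous γ := by
    apply Continuous.subtype_mk
    exact (continuous_id.smul continuous_const).add continuous_const
  have hγ0 : γ 0 = p := by
    apply Subtype.ext
    simp [hγ, hpy]
  have hopen : IsOpen (γ ⁻¹' interior (Subtype.val ⁻¹' C)) :=
    isOpen_interior.preimage hcont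
  have h0mem : (0:ℝ) ∈ γ ⁻¹' interior (Subtype.val ⁻¹' C) := by
    rw [mem_preimage, hγ0]; exact hpint
  obtain ⟨r, hr, hball⟩ := Metric.isOpen_iff.mp hopen 0 h0mem
  set t := r / 2 with ht
  have ht0 : 0 < t := by positivity
  have htmem : t ∈ Metric.ball (0:ℝ) r := by
    rw [Metric.mem_ball, dist_zero_right, Real.norm_eq_abs, abs_of_pos ht0]
    linarith
  have hy'C : t • (y - y0) + y ∈ C := by
    have h' : γ t ∈ Subtype.val ⁻¹' C := interior_subset (hball htmem)
    exact h'
  set y' := t • (y - y0) + y with hy'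
  -- nonemptiness
  obtain ⟨f, hfF⟩ := maxFace_nonempty hV hPV y0
  -- show maxFace P y = F
  apply Subset.antisymm _ hyC
  intro p' hp'
  have hp'P : p' ∈ P := hp'.1
  have hfP : f ∈ P := hfF.1
  have h1 : evalDir y' p' ≤ evalDir y' f := (hy'C hfF).2 p' hp'P
  have h2 : evalDir y0 p' ≤ evalDir y0 f := hfF.2 p' hp'P
  have h3 : evalDir y f ≤ evalDir y p' := hp'.2 f hfP
  have e1 : evalDir y' p' = t * (evalDir y p' - evalDir y0 p') + evalDir y p' := by
    rw [hy', evalDir_add_left, evalDir_smul_left, evalDir_sub_left]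
  have e2 : evalDir y' f = t * (evalDir y f - evalDir y0 f) + evalDir y f := by
    rw [hy', evalDir_add_left, evalDir_smul_left, evalDir_sub_left]
  have he0 : evalDir y0 f ≤ evalDir y0 p' := by nlinarith [h1, h3, ht0]
  refine ⟨hp'P, fun x' hx' => ?_⟩
  calc evalDir y0 x' ≤ evalDir y0 f := hfF.2 x' hx'
    _ ≤ evalDir y0 p' := he0

def pairB : (Fin d → ℝ) →ₗ[ℝ] Module.Dual ℝ (Fin d → ℝ) where
  toFun y := evalDirL y
  map_add' a b := LinearMap.ext fun x => by
    rw [LinearMap.add_apply]; exact evalDir_add_left a b x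
  map_smul' c a := LinearMap.ext fun x => by
    rw [RingHom.id_apply, LinearMap.smul_apply, smul_eq_mul]; exact evalDir_smul_left c a x

lemma pairB_injective : Function.Injective (pairB (d := d)) := by
  rw [← LinearMap.ker_eq_bot, Submodule.eq_bot_iff]
  intro w hw
  have h : evalDir w w = 0 := by
    have : (pairB w) w = 0 := by rw [LinearMap.mem_ker.mp hw]; rfl
    exact this
  have hsum : ∑ i, w i * w i = 0 := h
  funext i
  have h0 : ∀ j ∈ Finset.univ, (0:ℝ) ≤ w j * w j := fun j _ => mul_self_nonneg _
  have := (Finset.sum_eq_zero_iff_of_nonneg h0).mp hsum i (Finset.mem_univ i)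
  have := mul_self_eq_zero.mp this
  simpa using this

lemma pairB_surjective : Function.Surjective (pairB (d := d)) := by
  have : Module.finrank ℝ (Fin d → ℝ) = Module.finrank ℝ (Module.Dual ℝ (Fin d → ℝ)) :=
    (Subspace.dual_finrank_eq).symm
  exact (LinearMap.injective_iff_surjective_of_finrank_eq_finrank this).mp pairB_injective

lemma finrank_constSpace (F : Set (Fin d → ℝ)) :
    Module.finrank ℝ ↥(constSpace F) + Module.finrank ℝ ↥(vectorSpan ℝ F) = d := by
  set T := vectorSpan ℝ F with hT
  set Φ : (Fin d → ℝ) →ₗ[ℝ] Module.Dual ℝ T := T.subtype.dualMap ∘ₗ pairB with hΦ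
  have hker : LinearMap.ker Φ = constSpace F := by
    ext w
    constructor
    · intro hw x1 h1 x2 h2
      have hvanish : ∀ z ∈ T, evalDir w z = 0 := by
        intro z hz
        have : Φ w ⟨z, hz⟩ = 0 := by rw [LinearMap.mem_ker.mp hw]; rfl
        exact this
      have : evalDir w (x1 - x2) = 0 := hvanish _ (by
        have := vsub_mem_vectorSpan ℝ h1 h2
        rwa [vsub_eq_sub] at this)
      have hsub : evalDirL w (x1 - x2) = 0 := this
      rw [map_sub] at hsub
      have : evalDirL w x1 = evalDirL w x2 := by linarith [sub_eq_zero.mp hsub]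
      exact this
    · intro hw
      have hvanish : T ≤ LinearMap.ker (evalDirL w) := by
        rw [hT, vectorSpan_def, Submodule.span_le]
        rintro z ⟨x1, h1, x2, h2, rfl⟩
        simp only [SetLike.mem_coe, LinearMap.mem_ker, vsub_eq_sub, map_sub]
        exact sub_eq_zero.mpr (hw x1 h1 x2 h2)
      rw [LinearMap.mem_ker]
      ext z
      exact LinearMap.mem_ker.mp (hvanish z.2)
  have hsurj : Function.Surjective Φ := by
    rw [hΦ, LinearMap.coe_comp]
    exact Function.Surjective.comp
      (LinearMap.dualMap_surjective_of_injective (Submodule.injective_subtype T))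
      pairB_surjective
  have hrank := LinearMap.finrank_range_add_finrank_ker Φ
  rw [LinearMap.range_eq_top.mpr hsurj, hker] at hrank
  have hdual : Module.finrank ℝ ↥(⊤ : Submodule ℝ (Module.Dual ℝ T)) = Module.finrank ℝ T := by
    rw [finrank_top, Subspace.dual_finrank_eq]
  rw [hdual] at hrank
  have hfr : Module.finrank ℝ (Fin d → ℝ) = d := by
    simp [Module.finrank_pi]
  rw [hfr] at hrank
  omega

lemma vectorSpan_normalCone {V : Finset (Fin d → ℝ)} (hV : V.Nonempty)
    {P : Set (Fin d → ℝ)} (hPV : P = convexHull ℝ (V : Set (Fin d → ℝ))) (y0 : Fin d → ℝ) :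
    vectorSpan ℝ (normalCone P (maxFace P y0)) = constSpace (maxFace P y0) := by
  set F := maxFace P y0 with hF
  set C := normalCone P F with hC
  apply le_antisymm
  · rw [vectorSpan_def, Submodule.span_le]
    rintro w ⟨y1, hy1, y2, hy2, rfl⟩
    exact Submodule.sub_mem _ (normalCone_subset_constSpace P F hy1)
      (normalCone_subset_constSpace P F hy2)
  · intro w hw
    obtain ⟨ε, hε, hper⟩ := perturb hV hPV y0
    set ε' : ℝ := ε / (‖w‖ + 1) with hε'
    have hε'0 : 0 < ε' := by positivity
    set z := ε' • w + y0 with hz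
    have hy0C : y0 ∈ C := fun x hx => hx
    have hy0const : y0 ∈ constSpace F := normalCone_subset_constSpace P F hy0C
    have hzconst : z ∈ constSpace F :=
      Submodule.add_mem _ (Submodule.smul_mem _ _ hw) hy0const
    have hznear : ‖z - y0‖ < ε := by
      have : z - y0 = ε' • w := by rw [hz]; abel
      rw [this, norm_smul, Real.norm_eq_abs, abs_of_pos hε'0, hε']
      rw [div_mul_eq_mul_div, div_lt_iff₀ (by positivity)]
      nlinarith [norm_nonneg w, hε]
    have hzC : z ∈ C := hper z hznear hzconst
    have hvs : z -ᵥ y0 ∈ vectorSpan ℝ C := vsub_mem_vectorSpan ℝ hzC hy0C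
    have : (ε')⁻¹ • (z -ᵥ y0) ∈ vectorSpan ℝ C := Submodule.smul_mem _ _ hvs
    have heq : (ε')⁻¹ • (z -ᵥ y0) = w := by
      rw [vsub_eq_sub, hz, add_sub_cancel_right, smul_smul, inv_mul_cancel₀ (ne_of_gt hε'0),
        one_smul]
    rwa [heq] at this

lemma dim_add_dim {V : Finset (Fin d → ℝ)} (hV : V.Nonempty)
    {P : Set (Fin d → ℝ)} (hPV : P = convexHull ℝ (V : Set (Fin d → ℝ))) (y0 : Fin d → ℝ) :
    dimSet (normalCone P (maxFace P y0)) + dimSet (maxFace P y0) = d := by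
  have h := finrank_constSpace (maxFace P y0)
  rw [dimSet, dimSet, vectorSpan_normalCone hV hPV y0]
  exact h

lemma isExposed_maxFace (P : Set (Fin d → ℝ)) (y : Fin d → ℝ) :
    IsExposed ℝ P (maxFace P y) := by
  intro _
  refine ⟨LinearMap.toContinuousLinearMap (evalDirL y), ?_⟩
  rfl

lemma exists_maxFace_of_exposed {P F : Set (Fin d → ℝ)} (hF : IsExposed ℝ P F)
    (hne : F.Nonempty) : ∃ y0 : Fin d → ℝ, F = maxFace P y0 := by
  obtain ⟨l, hl⟩ := hF hne
  refine ⟨fun i => l (Pi.single i 1), ?_⟩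
  have hkey : ∀ x : Fin d → ℝ, l x = evalDir (fun i => l (Pi.single i 1)) x := by
    intro x
    have hx : x = ∑ i, x i • (Pi.single i 1 : Fin d → ℝ) := by
      conv_lhs => rw [pi_eq_sum_univ x]
      refine Finset.sum_congr rfl fun i _ => ?_
      congr 1
      ext j
      simp [Pi.single_apply, eq_comm]
    rw [show evalDir (fun i => l (Pi.single i 1)) x = ∑ i, l (Pi.single i 1) * x i from rfl]
    conv_lhs => rw [hx]
    rw [map_sum]
    refine Finset.sum_congr rfl fun i _ => ?_
    rw [map_smul, smul_eq_mul, mul_comm]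
  rw [hl]
  refine Set.ext fun x => ⟨fun hx => ⟨hx.1, fun x' h => by
      rw [← hkey, ← hkey]; exact hx.2 x' h⟩,
    fun hx => ⟨hx.1, fun x' h => by rw [hkey, hkey]; exact hx.2 x' h⟩⟩

lemma evalDir_sum (y : Fin d → ℝ) (V : Finset (Fin d → ℝ)) (w : (Fin d → ℝ) → ℝ) :
    evalDir y (∑ v ∈ V, w v • v) = ∑ v ∈ V, w v * evalDir y v := by
  rw [show evalDir y (∑ v ∈ V, w v • v) = evalDirL y (∑ v ∈ V, w v • v) from rfl, map_sum]
  exact Finset.sum_congr rfl fun v _ => by rw [map_smul]; rfl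

lemma normalCone_eq_vertexCone {V : Finset (Fin d → ℝ)} (hV : V.Nonempty)
    {P : Set (Fin d → ℝ)} (hPV : P = convexHull ℝ (V : Set (Fin d → ℝ))) (y0 : Fin d → ℝ) :
    normalCone P (maxFace P y0) =
      {y | ∀ v ∈ V.filter (fun v => v ∈ maxFace P y0), v ∈ maxFace P y} := by
  set F := maxFace P y0 with hF
  ext y
  simp only [normalCone, mem_setOf_eq]
  constructor
  · intro hy v hv
    exact hy (Finset.mem_filter.mp hv).2
  · intro hy x hx
    have hxP : x ∈ P := hx.1
    obtain ⟨w, hw0, hw1, hwx⟩ := Finset.mem_convexHull'.mp (hPV ▸ hxP)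
    -- vertices with positive weight lie in F
    have hM0 : ∀ v ∈ V, evalDir y0 v ≤ evalDir y0 x := fun v hv =>
      hx.2 v (hPV ▸ subset_convexHull ℝ _ hv)
    have hsum0 : ∑ v ∈ V, w v * (evalDir y0 x - evalDir y0 v) = 0 := by
      have h1 : evalDir y0 x = ∑ v ∈ V, w v * evalDir y0 v := by
        rw [← hwx, evalDir_sum]
      have h2 : ∑ v ∈ V, w v * evalDir y0 x = evalDir y0 x := by
        rw [← Finset.sum_mul, hw1, one_mul]
      calc ∑ v ∈ V, w v * (evalDir y0 x - evalDir y0 v)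
          = ∑ v ∈ V, (w v * evalDir y0 x - w v * evalDir y0 v) := by
            exact Finset.sum_congr rfl fun v _ => by ring
        _ = ∑ v ∈ V, w v * evalDir y0 x - ∑ v ∈ V, w v * evalDir y0 v := by
            rw [Finset.sum_sub_distrib]
        _ = 0 := by rw [h2, ← h1]; ring
    have hterm : ∀ v ∈ V, w v ≠ 0 → v ∈ maxFace P y := by
      intro v hv hwv
      have hnn : ∀ u ∈ V, 0 ≤ w u * (evalDir y0 x - evalDir y0 u) := fun u hu =>
        mul_nonneg (hw0 u hu) (by linarith [hM0 u hu])
      have := (Finset.sum_eq_zero_iff_of_nonneg hnn).mp hsum0 v hv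
      have hveq : evalDir y0 v = evalDir y0 x := by
        rcases mul_eq_zero.mp this with h | h
        · exact absurd h hwv
        · linarith [sub_eq_zero.mp h]
      have hvF : v ∈ F := by
        refine ⟨hPV ▸ subset_convexHull ℝ _ hv, fun x' hx' => ?_⟩
        rw [hveq]
        exact hx.2 x' hx'
      exact hy v (Finset.mem_filter.mpr ⟨hv, hvF⟩)
    -- some vertex has positive weight
    obtain ⟨v0, hv0V, hv0w⟩ : ∃ v0 ∈ V, w v0 ≠ 0 := by
      by_contra h
      push_neg at h
      have : ∑ v ∈ V, w v = 0 := Finset.sum_eq_zero h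
      rw [hw1] at this
      norm_num at this
    have hv0max : v0 ∈ maxFace P y := hterm v0 hv0V hv0w
    have hxval : evalDir y x = evalDir y v0 := by
      rw [← hwx, evalDir_sum]
      have : ∀ v ∈ V, w v * evalDir y v = w v * evalDir y v0 := by
        intro v hv
        by_cases hwv : w v = 0
        · rw [hwv]; ring
        · have hvmax := hterm v hv hwv
          rw [le_antisymm (hv0max.2 v hvmax.1) (hvmax.2 v0 hv0max.1)]
      rw [Finset.sum_congr rfl this, ← Finset.sum_mul, hw1, one_mul]
    exact ⟨hxP, fun x' hx' => hxval ▸ hv0max.2 x' hx'⟩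

lemma normalFan_finite {V : Finset (Fin d → ℝ)} (hV : V.Nonempty)
    {P : Set (Fin d → ℝ)} (hPV : P = convexHull ℝ (V : Set (Fin d → ℝ))) :
    (normalFan P).Finite := by
  have hfin : ((fun W : Finset (Fin d → ℝ) => {y : Fin d → ℝ | ∀ v ∈ W, v ∈ maxFace P y}) ''
      (V.powerset : Finset (Finset (Fin d → ℝ)))).Finite :=
    Set.Finite.image _ (V.powerset.finite_toSet)
  refine hfin.subset ?_
  rintro C ⟨F, hFexp, hFne, rfl⟩
  obtain ⟨y0, rfl⟩ := exists_maxFace_of_exposed hFexp hFne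
  have h := normalCone_eq_vertexCone hV hPV y0
  refine ⟨_, ?_, h.symm⟩
  rw [Finset.mem_coe, Finset.mem_powerset]
  exact Finset.filter_subset _ V

lemma intrinsicInterior_normalCone_eq {V : Finset (Fin d → ℝ)} (hV : V.Nonempty)
    {P : Set (Fin d → ℝ)} (hPV : P = convexHull ℝ (V : Set (Fin d → ℝ))) (y0 : Fin d → ℝ) :
    intrinsicInterior ℝ (normalCone P (maxFace P y0)) = {y | maxFace P y = maxFace P y0} := by
  ext y
  constructor
  · exact fun hy => maxFace_eq_of_mem_intrinsicInterior' hV hPV hy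
  · intro hy
    have := mem_intrinsicInterior_normalCone hV hPV y
    rwa [show maxFace P y = maxFace P y0 from hy] at this

def natCast {d : ℕ} (y : Fin d → ℕ) : Fin d → ℝ := fun i => (y i : ℝ)

lemma natCast_injective : Function.Injective (natCast (d := d)) := by
  intro a b hab
  funext i
  exact Nat.cast_injective (congrFun hab i)

lemma stepR1 {V : Finset (Fin d → ℝ)} (hV : V.Nonempty)
    {P : Set (Fin d → ℝ)} (hPV : P = convexHull ℝ (V : Set (Fin d → ℝ))) (y0 : Fin d → ℝ)
    (m : ℕ) :
    latticeCount (dilate (m + 1) (intrinsicInterior ℝ (normalCone P (maxFace P y0)) ∩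
        {x : Fin d → ℝ | ∀ i, 0 < x i ∧ x i < 1})) =
      {y : Fin d → ℕ | (∀ i, y i ∈ Finset.Icc 1 m) ∧
        natCast y ∈ intrinsicInterior ℝ (normalCone P (maxFace P y0))}.ncard := by
  rw [intrinsicInterior_normalCone_eq hV hPV y0]
  set c : ℝ := ((m + 1 : ℕ) : ℝ) with hc
  have hc0 : 0 < c := by positivity
  have hcub : ∀ x : Fin d → ℝ,
      x ∈ dilate (m + 1) ({y : Fin d → ℝ | maxFace P y = maxFace P y0} ∩
        {x : Fin d → ℝ | ∀ i, 0 < x i ∧ x i < 1}) ↔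
      (maxFace P x = maxFace P y0 ∧ ∀ i, 0 < x i ∧ x i < c) := by
    intro x
    rw [dilate, mem_smul_set_iff_inv_smul_mem₀ (ne_of_gt hc0), Set.mem_inter_iff]
    have hsm : maxFace P (c⁻¹ • x) = maxFace P x := maxFace_smul (by positivity) x
    constructor
    · rintro ⟨h1, h2⟩
      refine ⟨by rw [← hsm]; exact h1, fun i => ?_⟩
      have hi := h2 i
      simp only [Pi.smul_apply, smul_eq_mul, Set.mem_setOf_eq] at hi
      have e : c * (c⁻¹ * x i) = x i := by field_simp
      constructor
      · have := mul_pos hc0 hi.1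
        rwa [e] at this
      · have := mul_lt_mul_of_pos_left hi.2 hc0
        rwa [e, mul_one] at this
    · rintro ⟨h1, h2⟩
      refine ⟨by show maxFace P (c⁻¹ • x) = maxFace P y0; rw [hsm]; exact h1, fun i => ?_⟩
      simp only [Pi.smul_apply, smul_eq_mul, Set.mem_setOf_eq]
      have hi := h2 i
      constructor
      · exact mul_pos (inv_pos.mpr hc0) hi.1
      · have := mul_lt_mul_of_pos_left hi.2 (inv_pos.mpr hc0)
        rwa [inv_mul_cancel₀ (ne_of_gt hc0)] at this
  have himg : {x ∈ dilate (m + 1) ({y : Fin d → ℝ | maxFace P y = maxFace P y0} ∩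
        {x : Fin d → ℝ | ∀ i, 0 < x i ∧ x i < 1}) | IsLatticePoint x} =
      natCast '' {y : Fin d → ℕ | (∀ i, y i ∈ Finset.Icc 1 m) ∧
        maxFace P (natCast y) = maxFace P y0} := by
    ext x
    constructor
    · rintro ⟨hx, hlat⟩
      rw [hcub x] at hx
      obtain ⟨hmax, hbox⟩ := hx
      have key : ∀ i, ∃ n : ℕ, x i = (n : ℝ) ∧ 1 ≤ n ∧ n ≤ m := by
        intro i
        obtain ⟨n, hn⟩ := hlat i
        have h0 : (0:ℝ) < (n : ℝ) := hn ▸ (hbox i).1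
        have hmu : (n : ℝ) < ((m:ℝ) + 1) := by
          have := (hbox i).2
          rw [hn] at this
          rw [hc] at this
          push_cast at this
          exact this
        have h0' : 0 < n := by exact_mod_cast h0
        have hm' : n < (m : ℤ) + 1 := by exact_mod_cast hmu
        refine ⟨n.toNat, ?_, by omega, by omega⟩
        rw [hn]
        norm_cast
        omega
      choose nf hnf h1f h2f using key
      refine ⟨nf, ⟨fun i => Finset.mem_Icc.mpr ⟨h1f i, h2f i⟩, ?_⟩, ?_⟩
      · have : natCast nf = x := funext fun i => (hnf i).symm
        rw [this]
        exact hmax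
      · exact funext fun i => (hnf i).symm
    · rintro ⟨y, ⟨hbox, hmax⟩, rfl⟩
      refine ⟨(hcub (natCast y)).mpr ⟨hmax, fun i => ?_⟩,
        fun i => ⟨(y i : ℤ), by simp [natCast]⟩⟩
      obtain ⟨hy1, hy2⟩ := Finset.mem_Icc.mp (hbox i)
      constructor
      · show (0:ℝ) < (y i : ℝ)
        exact_mod_cast Nat.lt_of_lt_of_le Nat.zero_lt_one hy1
      · show (y i : ℝ) < c
        rw [hc]
        exact_mod_cast Nat.lt_succ_of_le hy2
  rw [latticeCount, himg, Set.ncard_image_of_injective _ natCast_injective]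
  rfl

end St19

open St19

/-- For a generalized permutahedron `P ⊆ ℝ^d`, `k ∈ {0,…,d-1}` and
`m > 0`, the number of integer points `y ∈ {1,…,m}^d` whose maximal face `P_y` is
`k`-dimensional equals the sum, over all cones `C` of the normal fan of `P` of dimension
`d - k`, of the Ehrhart counting functions `Ehr_{C° ∩ (0,1)^d}(m+1)` of the relatively open
regions `C° ∩ (0,1)^d`. -/
theorem stmt19 {d : ℕ} (P : Set (Fin d → ℝ)) (hP : IsGenPerm P) (k : ℕ) (hk : k < d)
    (m : ℕ) (hm : 0 < m) :
    Set.ncard {y : Fin d → ℕ | (∀ i, y i ∈ Finset.Icc 1 m) ∧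
        dimSet (maxFace P (fun i => (y i : ℝ))) = k} =
      ∑ᶠ C ∈ {C | C ∈ normalFan P ∧ dimSet C = d - k},
        latticeCount (dilate (m + 1)
          (intrinsicInterior ℝ C ∩ {x : Fin d → ℝ | ∀ i, 0 < x i ∧ x i < 1})) := by
  classical
  obtain ⟨⟨V, hV, hPV⟩, -⟩ := hP
  have hSfin : {C | C ∈ normalFan P ∧ dimSet C = d - k}.Finite :=
    (normalFan_finite hV hPV).subset (fun C hC => hC.1)
  set S := hSfin.toFinset with hSdef
  have hboxfin : {y : Fin d → ℕ | ∀ i, y i ∈ Finset.Icc 1 m}.Finite := by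
    apply Set.Finite.subset (Set.Finite.pi (fun i : Fin d => (Finset.Icc 1 m).finite_toSet))
    intro y hy
    exact fun i _ => hy i
  have hfibfin : ∀ C : Set (Fin d → ℝ), ({y : Fin d → ℕ | (∀ i, y i ∈ Finset.Icc 1 m) ∧
      natCast y ∈ intrinsicInterior ℝ C}).Finite := fun C => hboxfin.subset fun y hy => hy.1
  set fibF : Set (Fin d → ℝ) → Finset (Fin d → ℕ) := fun C => (hfibfin C).toFinset with hfibF
  -- right-hand side
  have hRHS : ∑ᶠ C ∈ {C | C ∈ normalFan P ∧ dimSet C = d - k},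
        latticeCount (dilate (m + 1)
          (intrinsicInterior ℝ C ∩ {x : Fin d → ℝ | ∀ i, 0 < x i ∧ x i < 1})) =
      ∑ C ∈ S, (fibF C).card := by
    rw [← hSfin.coe_toFinset, finsum_mem_coe_finset]
    refine Finset.sum_congr rfl fun C hC => ?_
    obtain ⟨⟨F, hexp, hne, hCeq⟩, hdim⟩ := hSfin.mem_toFinset.mp hC
    obtain ⟨y0, rfl⟩ := exists_maxFace_of_exposed hexp hne
    subst hCeq
    rw [stepR1 hV hPV y0 m]
    rw [Set.ncard_eq_toFinset_card _ (hfibfin _)]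
  -- disjointness of fibers
  have hdisj : ∀ C1 ∈ S, ∀ C2 ∈ S, C1 ≠ C2 → Disjoint (fibF C1) (fibF C2) := by
    intro C1 h1 C2 h2 hne
    rw [Finset.disjoint_left]
    intro y hy1 hy2
    obtain ⟨⟨F1, hexp1, hne1, hCeq1⟩, -⟩ := hSfin.mem_toFinset.mp h1
    obtain ⟨⟨F2, hexp2, hne2, hCeq2⟩, -⟩ := hSfin.mem_toFinset.mp h2
    obtain ⟨y01, rfl⟩ := exists_maxFace_of_exposed hexp1 hne1
    obtain ⟨y02, rfl⟩ := exists_maxFace_of_exposed hexp2 hne2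
    subst hCeq1
    subst hCeq2
    have hII1 := ((hfibfin _).mem_toFinset.mp hy1).2
    have hII2 := ((hfibfin _).mem_toFinset.mp hy2).2
    have e1 : maxFace P (natCast y) = maxFace P y01 :=
      maxFace_eq_of_mem_intrinsicInterior' hV hPV hII1
    have e2 : maxFace P (natCast y) = maxFace P y02 :=
      maxFace_eq_of_mem_intrinsicInterior' hV hPV hII2
    apply hne
    rw [← e1, ← e2]
  -- left-hand side
  have hLHS : {y : Fin d → ℕ | (∀ i, y i ∈ Finset.Icc 1 m) ∧
      dimSet (maxFace P (fun i => (y i : ℝ))) = k} = ↑(S.biUnion fibF) := by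
    ext y
    simp only [Set.mem_setOf_eq, Finset.coe_biUnion, Set.mem_iUnion, Finset.mem_coe,
      Finset.mem_biUnion]
    constructor
    · rintro ⟨hbox, hdim⟩
      have hCfan : normalCone P (maxFace P (natCast y)) ∈ normalFan P :=
        ⟨_, isExposed_maxFace P (natCast y), maxFace_nonempty hV hPV (natCast y), rfl⟩
      have hdims := dim_add_dim hV hPV (natCast y)
      have hdimF : dimSet (maxFace P (natCast y)) = k := hdim
      rw [hdimF] at hdims
      have hdimC : dimSet (normalCone P (maxFace P (natCast y))) = d - k :=
        Nat.eq_sub_of_add_eq hdims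
      refine ⟨normalCone P (maxFace P (natCast y)), hSfin.mem_toFinset.mpr ⟨hCfan, hdimC⟩, ?_⟩
      exact (hfibfin _).mem_toFinset.mpr
        ⟨hbox, mem_intrinsicInterior_normalCone hV hPV (natCast y)⟩
    · rintro ⟨C, hCS, hyC⟩
      obtain ⟨⟨F, hexp, hne', hCeq⟩, hdim⟩ := hSfin.mem_toFinset.mp hCS
      obtain ⟨y0, rfl⟩ := exists_maxFace_of_exposed hexp hne'
      subst hCeq
      obtain ⟨hbox, hII⟩ := (hfibfin _).mem_toFinset.mp hyC
      have e1 : maxFace P (natCast y) = maxFace P y0 :=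
        maxFace_eq_of_mem_intrinsicInterior' hV hPV hII
      have hdims := dim_add_dim hV hPV y0
      rw [hdim] at hdims
      have : dimSet (maxFace P y0) = k := by
        have hb := Nat.eq_sub_of_add_eq' hdims
        rwa [Nat.sub_sub_self hk.le] at hb
      exact ⟨hbox, by rw [show (fun i => ((y i : ℕ) : ℝ)) = natCast y from rfl, e1]; exact this⟩
  rw [hLHS, Set.ncard_coe_finset, Finset.card_biUnion hdisj, hRHS]
end
end
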